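/- arXiv:1907.11636 — 5 statements merged into one kernel-verified Lean document; each statement's English description precedes it below -/
import Mathlib

section
/- Generating function of the Hermite polynomials: for all x, y ∈ ℝ, exp(xy − x²/2) = Σ_{k=0}^∞ (x^k / k!) · h_k(y), with the series converging in L²(N(0,1)) as a function of y for each fixed x. -/
open MeasureTheory ProbabilityTheory

/-- The Hermite polynomials: `h_0 = 1`, `h_{k+1}(x) = x h_k(x) − h_k'(x)`. -/
noncomputable def hermite : ℕ → Polynomial ℝ
  | 0 => 1
  | k + 1 => Polynomial.X * hermite k - Polynomial.derivative (hermite k)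

open scoped Nat

lemma hermite_eq_map (n : ℕ) :
    hermite n = (Polynomial.hermite n).map (Int.castRingHom ℝ) := by
  induction n with
  | zero => simp [hermite, Polynomial.hermite_zero]
  | succ k ih => rw [hermite, ih, Polynomial.hermite_succ]; simp [Polynomial.derivative_map]

lemma fact_two_mul (m : ℕ) : (2*m)! = 2^m * m ! * (2*m-1)‼ := by
  cases m with
  | zero => simp
  | succ m =>
    rw [show 2 * (m+1) = (2*m+1) + 1 by ring, Nat.factorial_eq_mul_doubleFactorial,
      show 2*m+1+1 = 2*(m+1) by ring, Nat.doubleFactorial_two_mul,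
      show 2*(m+1)-1 = 2*m+1 by omega]

lemma key_term (x y : ℝ) (N m : ℕ) (hm : m ∈ Finset.range (N / 2 + 1)) :
    x ^ N / (N ! : ℝ) * (((Polynomial.hermite N).coeff (N - 2*m) : ℝ) * y ^ (N - 2*m))
      = (x*y) ^ (N - 2*m) / ((N - 2*m)! : ℝ) * ((-(x^2)/2) ^ m / (m ! : ℝ)) := by
  simp only [Finset.mem_range] at hm
  have h2m : 2*m ≤ N := by omega
  obtain ⟨a, ha⟩ : ∃ a, N = a + 2*m := ⟨N - 2*m, by omega⟩
  subst ha
  have hk : a + 2*m - 2*m = a := by omega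
  rw [hk]
  rw [Polynomial.coeff_hermite_of_even_add (by exact ⟨a + m, by omega⟩)]
  rw [show (a + 2*m - a - 1) = 2*m - 1 by omega, show (a + 2*m - a) / 2 = m by omega]
  have hch : ((a + 2*m)! : ℝ) = (a + 2*m).choose a * (a ! * (2*m)!) := by
    have hsym : (a + 2*m).choose (2*m) = (a + 2*m).choose a := by
      have h := Nat.choose_symm (show a ≤ a + 2*m by omega)
      rwa [Nat.add_sub_cancel_left] at h
    have := Nat.add_choose_mul_factorial_mul_factorial a (2*m)
    push_cast [← hsym, ← this]
    ring
  rw [hch, fact_two_mul]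
  have ha : (a ! : ℝ) ≠ 0 := by positivity
  have hm' : (m ! : ℝ) ≠ 0 := by positivity
  have hc : ((a + 2*m).choose a : ℝ) ≠ 0 := by
    have := Nat.choose_pos (show a ≤ a + 2*m by omega); positivity
  have hd : ((2*m-1)‼ : ℝ) ≠ 0 := by
    have := Nat.doubleFactorial_pos (2*m-1); positivity
  push_cast
  rw [mul_pow, pow_add, pow_mul]
  field_simp
  have h2 : ((-1/2:ℝ))^m * 2^m = (-1)^m := by rw [← mul_pow]; norm_num
  linear_combination (-(x ^ a * x ^ (m * 2) * y ^ a)) * h2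

lemma eval_hermite_eq (x y : ℝ) (N : ℕ) :
    x ^ N / (N ! : ℝ) * (hermite N).eval y
      = ∑ m ∈ Finset.range (N/2+1),
          (x*y) ^ (N - 2*m) / ((N - 2*m)! : ℝ) * ((-(x^2)/2) ^ m / (m ! : ℝ)) := by
  rw [hermite_eq_map]
  have hdeg : ((Polynomial.hermite N).map (Int.castRingHom ℝ)).natDegree < N + 1 :=
    lt_of_le_of_lt (le_trans Polynomial.natDegree_map_le
      (le_of_eq Polynomial.natDegree_hermite)) (Nat.lt_succ_self N)
  rw [Polynomial.eval_eq_sum_range' hdeg]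
  simp only [Polynomial.coeff_map, eq_intCast, Int.cast_id]
  rw [Finset.mul_sum]
  rw [← Finset.sum_filter_of_ne (p := fun k => Even (N + k))
    (by
      intro k _ hne
      by_contra hodd
      rw [Polynomial.coeff_hermite_of_odd_add (Nat.not_even_iff_odd.1 hodd)] at hne
      simp at hne)]
  refine Finset.sum_nbij' (i := fun k => (N - k)/2) (j := fun m => N - 2*m) ?_ ?_ ?_ ?_ ?_
  · intro k hk
    simp only [Finset.mem_filter, Finset.mem_range] at hk ⊢
    omega
  · intro m hm
    simp only [Finset.mem_filter, Finset.mem_range] at hm ⊢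
    refine ⟨by omega, ⟨N - m, by omega⟩⟩
  · intro k hk
    simp only [Finset.mem_filter, Finset.mem_range] at hk
    obtain ⟨c, hc⟩ := hk.2
    show N - 2 * ((N - k) / 2) = k
    omega
  · intro m hm
    simp only [Finset.mem_range] at hm
    show (N - (N - 2 * m)) / 2 = m
    omega
  · intro k hk
    simp only [Finset.mem_filter, Finset.mem_range] at hk
    obtain ⟨c, hc⟩ := hk.2
    have hkeq : N - 2*((N - k)/2) = k := by omega
    rw [← key_term x y N ((N-k)/2) (by simp only [Finset.mem_range]; omega), hkeq]

def sigmaEquiv : ℕ × ℕ ≃ Σ N : ℕ, Fin (N / 2 + 1) where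
  toFun p := ⟨p.1 + 2 * p.2, ⟨p.2, by omega⟩⟩
  invFun q := (q.1 - 2 * (q.2 : ℕ), q.2)
  left_inv p := by cases p; simp
  right_inv q := by
    obtain ⟨N, m, hm⟩ := q
    have h : N - 2*m + 2*m = N := by omega
    refine Sigma.ext ?_ ?_
    · show N - 2*m + 2*m = N
      omega
    · show HEq (⟨m, _⟩ : Fin ((N - 2*m + 2*m)/2+1)) (⟨m, hm⟩ : Fin (N/2+1))
      exact (Fin.heq_ext_iff (by rw [h])).2 rfl

lemma hasSum_exp_series (t : ℝ) : HasSum (fun n => t ^ n / (n ! : ℝ)) (Real.exp t) := by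
  rw [Real.exp_eq_exp_ℝ]
  exact NormedSpace.expSeries_div_hasSum_exp t

lemma summable_prod_aux (u v : ℝ) :
    Summable (fun p : ℕ × ℕ => u ^ p.1 / (p.1 ! : ℝ) * (v ^ p.2 / (p.2 ! : ℝ))) := by
  have hF : Summable fun k : ℕ => |u| ^ k / (k ! : ℝ) := (hasSum_exp_series |u|).summable
  have hG : Summable fun k : ℕ => |v| ^ k / (k ! : ℝ) := (hasSum_exp_series |v|).summable
  have h := hF.mul_of_nonneg hG (fun k => by positivity) (fun k => by positivity)
  refine Summable.of_abs (h.congr fun p => ?_)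
  simp [abs_mul, abs_div, abs_pow, abs_abs]

set_option maxHeartbeats 1000000 in
lemma hasSum_prod (u v : ℝ) :
    HasSum (fun p : ℕ × ℕ => u ^ p.1 / (p.1 ! : ℝ) * (v ^ p.2 / (p.2 ! : ℝ)))
      (Real.exp u * Real.exp v) :=
  (hasSum_exp_series u).mul (hasSum_exp_series v) (summable_prod_aux u v)

lemma hasSum_fiber (x y : ℝ) (N : ℕ) :
    HasSum (fun m : Fin (N / 2 + 1) =>
        (x*y) ^ (N - 2*(m:ℕ)) / ((N - 2*(m:ℕ))! : ℝ) * ((-(x^2)/2) ^ (m:ℕ) / ((m:ℕ)! : ℝ)))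
      (x ^ N / (N ! : ℝ) * (hermite N).eval y) := by
  have heq : x ^ N / (N ! : ℝ) * (hermite N).eval y
      = ∑ m : Fin (N / 2 + 1),
          (x*y) ^ (N - 2*(m:ℕ)) / ((N - 2*(m:ℕ))! : ℝ) * ((-(x^2)/2) ^ (m:ℕ) / ((m:ℕ)! : ℝ)) := by
    rw [eval_hermite_eq x y N]
    exact (Fin.sum_univ_eq_sum_range (fun m =>
      (x*y) ^ (N - 2*m) / ((N - 2*m)! : ℝ) * ((-(x^2)/2) ^ m / (m ! : ℝ))) (N/2+1)).symm
  rw [heq]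
  exact hasSum_fintype _

theorem hasSum_hermite (x y : ℝ) :
    HasSum (fun k => x ^ k / (k ! : ℝ) * (hermite k).eval y)
      (Real.exp (x * y - x ^ 2 / 2)) := by
  have H : HasSum (fun p : ℕ × ℕ => (x*y) ^ p.1 / (p.1 ! : ℝ) * ((-(x^2)/2) ^ p.2 / (p.2 ! : ℝ)))
      (Real.exp (x * y - x ^ 2 / 2)) := by
    have := hasSum_prod (x*y) (-(x^2)/2)
    rwa [← Real.exp_add, show x*y + -(x^2)/2 = x*y - x^2/2 by ring] at this
  have H2 := (sigmaEquiv.symm.hasSum_iff).2 H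
  refine H2.sigma fun N => ?_
  have h := hasSum_fiber x y N
  refine h.congr_fun fun m => ?_
  simp [sigmaEquiv, Function.comp]

lemma abs_term_le (x y : ℝ) (N : ℕ) :
    |x ^ N / (N ! : ℝ) * (hermite N).eval y|
      ≤ ∑ m ∈ Finset.range (N/2+1),
          |x*y| ^ (N - 2*m) / ((N - 2*m)! : ℝ) * ((x^2/2) ^ m / (m ! : ℝ)) := by
  rw [eval_hermite_eq x y N]
  refine le_trans (Finset.abs_sum_le_sum_abs _ _) (le_of_eq (Finset.sum_congr rfl fun m _ => ?_))
  rw [abs_mul]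
  congr 1
  · rw [abs_div, abs_pow, Nat.abs_cast]
  · rw [abs_div, abs_pow, Nat.abs_cast, abs_div, abs_neg,
      abs_of_nonneg (sq_nonneg x), abs_of_nonneg (by norm_num : (0:ℝ) ≤ (2:ℝ))]

lemma hasSum_abs_fiber (x y : ℝ) :
    HasSum (fun N => ∑ m ∈ Finset.range (N/2+1),
        |x*y| ^ (N - 2*m) / ((N - 2*m)! : ℝ) * ((x^2/2) ^ m / (m ! : ℝ)))
      (Real.exp (|x*y| + x^2/2)) := by
  have H : HasSum (fun p : ℕ × ℕ => |x*y| ^ p.1 / (p.1 ! : ℝ) * ((x^2/2) ^ p.2 / (p.2 ! : ℝ)))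
      (Real.exp (|x*y| + x^2/2)) := by
    have := hasSum_prod |x*y| (x^2/2)
    rwa [← Real.exp_add] at this
  have H2 := (sigmaEquiv.symm.hasSum_iff).2 H
  refine H2.sigma fun N => ?_
  have h := hasSum_fintype (fun m : Fin (N / 2 + 1) =>
      |x*y| ^ (N - 2*(m:ℕ)) / ((N - 2*(m:ℕ))! : ℝ) * ((x^2/2) ^ (m:ℕ) / ((m:ℕ)! : ℝ)))
  rw [Fin.sum_univ_eq_sum_range (fun m =>
      |x*y| ^ (N - 2*m) / ((N - 2*m)! : ℝ) * ((x^2/2) ^ m / (m ! : ℝ))) (N/2+1)] at h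
  refine h.congr_fun fun m => ?_
  simp [sigmaEquiv, Function.comp]

lemma partial_sum_bound (x y : ℝ) (n : ℕ) :
    |∑ k ∈ Finset.range n, x ^ k / (k ! : ℝ) * (hermite k).eval y|
      ≤ Real.exp (|x*y| + x^2/2) := by
  refine le_trans (Finset.abs_sum_le_sum_abs _ _) ?_
  refine le_trans (Finset.sum_le_sum fun k _ => abs_term_le x y k) ?_
  refine sum_le_hasSum _ (fun k _ => ?_) (hasSum_abs_fiber x y)
  positivity

lemma integrable_exp_lin_volume (c : ℝ) :
    MeasureTheory.Integrable (fun y : ℝ => Real.exp (c*y - y^2/2)) := by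
  have h := integrable_exp_neg_mul_sq (show (0:ℝ) < 1/2 by norm_num)
  have h2 := h.comp_sub_right c
  have h3 := h2.const_mul (Real.exp (c^2/2))
  refine h3.congr (Filter.Eventually.of_forall fun y => ?_)
  show Real.exp (c^2/2) * Real.exp (-(1/2) * (y - c)^2) = Real.exp (c*y - y^2/2)
  rw [← Real.exp_add]
  congr 1
  ring

lemma integrable_exp_abs_gauss (c : ℝ) :
    MeasureTheory.Integrable (fun y : ℝ => Real.exp (c * |y|)) (gaussianReal 0 1) := by
  rw [gaussianReal_of_var_ne_zero 0 one_ne_zero,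
    integrable_withDensity_iff (measurable_gaussianPDF 0 1)
      (Filter.Eventually.of_forall fun y => ENNReal.ofReal_lt_top)]
  have hpdf : ∀ y : ℝ, (gaussianPDF 0 1 y).toReal = gaussianPDFReal 0 1 y := fun y =>
    ENNReal.toReal_ofReal (gaussianPDFReal_nonneg 0 1 y)
  have hpdfval : ∀ y : ℝ, gaussianPDFReal 0 1 y
      = (Real.sqrt (2*Real.pi))⁻¹ * Real.exp (-y^2/2) := by
    intro y
    unfold gaussianPDFReal
    norm_num
  have hmaj : MeasureTheory.Integrable (fun y : ℝ =>
      (Real.sqrt (2*Real.pi))⁻¹ * (Real.exp (c*y - y^2/2) + Real.exp ((-c)*y - y^2/2))) :=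
    ((integrable_exp_lin_volume c).add (integrable_exp_lin_volume (-c))).const_mul _
  refine hmaj.mono ?_ (Filter.Eventually.of_forall fun y => ?_)
  · exact (((Real.continuous_exp.comp (continuous_const.mul continuous_abs)).measurable).mul
      ((measurable_gaussianPDF 0 1).ennreal_toReal)).aestronglyMeasurable
  · have h0 : (0:ℝ) ≤ (gaussianPDF 0 1 y).toReal := ENNReal.toReal_nonneg
    rw [Real.norm_eq_abs, abs_of_nonneg (by positivity), hpdf y, hpdfval y]
    have hinv : (0:ℝ) ≤ (Real.sqrt (2*Real.pi))⁻¹ := by positivity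
    have key : Real.exp (c*|y|) * Real.exp (-y^2/2)
        ≤ Real.exp (c*y - y^2/2) + Real.exp ((-c)*y - y^2/2) := by
      rw [← Real.exp_add]
      rcases le_total 0 y with hy | hy
      · rw [abs_of_nonneg hy]
        refine le_trans (le_of_eq (by ring_nf)) (le_add_of_nonneg_right (Real.exp_pos _).le)
      · rw [abs_of_nonpos hy]
        refine le_trans (le_of_eq (by ring_nf)) (le_add_of_nonneg_left (Real.exp_pos _).le)
    calc Real.exp (c*|y|) * ((Real.sqrt (2*Real.pi))⁻¹ * Real.exp (-y^2/2))
        = (Real.sqrt (2*Real.pi))⁻¹ * (Real.exp (c*|y|) * Real.exp (-y^2/2)) := by ring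
      _ ≤ (Real.sqrt (2*Real.pi))⁻¹ * (Real.exp (c*y - y^2/2) + Real.exp ((-c)*y - y^2/2)) :=
          mul_le_mul_of_nonneg_left key hinv
      _ ≤ ‖(Real.sqrt (2*Real.pi))⁻¹ * (Real.exp (c*y - y^2/2) + Real.exp ((-c)*y - y^2/2))‖ :=
          le_abs_self _

/-- Generating function of the Hermite polynomials:
`exp(xy − x²/2) = Σ_k (x^k/k!) h_k(y)`, pointwise and in `L²(N(0,1))`. -/
theorem stmt8 (x : ℝ) :
    (∀ y : ℝ, HasSum (fun k => x ^ k / (Nat.factorial k : ℝ) * (hermite k).eval y)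
        (Real.exp (x * y - x ^ 2 / 2))) ∧
    Filter.Tendsto (fun n => ∫ y,
        (Real.exp (x * y - x ^ 2 / 2)
          - ∑ k ∈ Finset.range n, x ^ k / (Nat.factorial k : ℝ) * (hermite k).eval y) ^ 2
        ∂(gaussianReal 0 1)) Filter.atTop (nhds 0) := by
  refine ⟨fun y => hasSum_hermite x y, ?_⟩
  have hmeas : ∀ n : ℕ, MeasureTheory.AEStronglyMeasurable (fun y : ℝ =>
      (Real.exp (x * y - x ^ 2 / 2)
        - ∑ k ∈ Finset.range n, x ^ k / (k ! : ℝ) * (hermite k).eval y) ^ 2)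
      (gaussianReal 0 1) := by
    intro n
    refine Continuous.aestronglyMeasurable ?_
    refine Continuous.pow (Continuous.sub ?_ ?_) 2
    · exact Real.continuous_exp.comp (by fun_prop)
    · exact continuous_finset_sum _ fun k _ => continuous_const.mul ((hermite k).continuous)
  have hbnd_int : MeasureTheory.Integrable
      (fun y : ℝ => (2 * Real.exp (|x| * |y| + x ^ 2 / 2)) ^ 2) (gaussianReal 0 1) := by
    have h := (integrable_exp_abs_gauss (2 * |x|)).const_mul (4 * Real.exp (x ^ 2))
    refine h.congr (Filter.Eventually.of_forall fun y => ?_)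
    show 4 * Real.exp (x ^ 2) * Real.exp (2 * |x| * |y|)
      = (2 * Real.exp (|x| * |y| + x ^ 2 / 2)) ^ 2
    rw [mul_pow, sq (Real.exp _), ← Real.exp_add]
    norm_num
    rw [mul_assoc, ← Real.exp_add]
    congr 1
    ring
  have hbound : ∀ n : ℕ, ∀ᵐ y ∂(gaussianReal 0 1),
      ‖(Real.exp (x * y - x ^ 2 / 2)
        - ∑ k ∈ Finset.range n, x ^ k / (k ! : ℝ) * (hermite k).eval y) ^ 2‖
      ≤ (2 * Real.exp (|x| * |y| + x ^ 2 / 2)) ^ 2 := by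
    intro n
    refine Filter.Eventually.of_forall fun y => ?_
    have h1 : Real.exp (x * y - x ^ 2 / 2) ≤ Real.exp (|x| * |y| + x ^ 2 / 2) := by
      refine Real.exp_le_exp.2 ?_
      have : x * y ≤ |x| * |y| := le_trans (le_abs_self _) (le_of_eq (abs_mul x y))
      nlinarith [sq_nonneg x]
    have h2 : |∑ k ∈ Finset.range n, x ^ k / (k ! : ℝ) * (hermite k).eval y|
        ≤ Real.exp (|x| * |y| + x ^ 2 / 2) := by
      have := partial_sum_bound x y n
      rwa [abs_mul] at this
    have habs : |Real.exp (x * y - x ^ 2 / 2)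
        - ∑ k ∈ Finset.range n, x ^ k / (k ! : ℝ) * (hermite k).eval y|
        ≤ 2 * Real.exp (|x| * |y| + x ^ 2 / 2) := by
      refine le_trans (abs_sub _ _) ?_
      rw [abs_of_nonneg (Real.exp_pos _).le]
      linarith
    rw [Real.norm_eq_abs, abs_of_nonneg (sq_nonneg _), ← sq_abs]
    exact pow_le_pow_left₀ (abs_nonneg _) habs 2
  have hlim : ∀ᵐ y ∂(gaussianReal 0 1),
      Filter.Tendsto (fun n => (Real.exp (x * y - x ^ 2 / 2)
        - ∑ k ∈ Finset.range n, x ^ k / (k ! : ℝ) * (hermite k).eval y) ^ 2)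
      Filter.atTop (nhds ((0:ℝ))) := by
    refine Filter.Eventually.of_forall fun y => ?_
    have h := (hasSum_hermite x y).tendsto_sum_nat
    have h2 := (tendsto_const_nhds (x := Real.exp (x * y - x ^ 2 / 2))
      (f := Filter.atTop (α := ℕ))).sub h
    have h3 := h2.pow 2
    simpa using h3
  have := MeasureTheory.tendsto_integral_of_dominated_convergence
    (μ := gaussianReal 0 1)
    (F := fun n (y : ℝ) => (Real.exp (x * y - x ^ 2 / 2)
        - ∑ k ∈ Finset.range n, x ^ k / (k ! : ℝ) * (hermite k).eval y) ^ 2)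
    (f := fun _ => (0:ℝ))
    (bound := fun y => (2 * Real.exp (|x| * |y| + x ^ 2 / 2)) ^ 2)
    hmeas hbnd_int hbound hlim
  simpa using this
end

section
/- In the additive Gaussian noise model, for any multi-index α ∈ ℕ^N, the inner product of the likelihood ratio with the multivariate Hermite polynomial H_α equals the corresponding moment of the prior: ⟨L_n, H_α⟩ = E_{X∼P_n}[∏_{i=1}^N X_i^{α_i}], where ⟨f,g⟩ = E_{Y∼Q_n}[f(Y)g(Y)]. -/
open MeasureTheory ProbabilityTheory

section Helpers

open Real Filter Polynomial
open scoped ENNReal NNReal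



lemma L1 (n : ℕ) {b : ℝ} (hb : 0 < b) :
    Integrable (fun y : ℝ => y ^ n * Real.exp (-b * y ^ 2)) := by
  simpa [Real.rpow_natCast] using
    integrable_rpow_mul_exp_neg_mul_sq hb (s := n)
      (lt_of_lt_of_le neg_one_lt_zero (Nat.cast_nonneg n))

lemma L2 (p : Polynomial ℝ) {b : ℝ} (hb : 0 < b) :
    Integrable (fun y : ℝ => p.eval y * Real.exp (-b * y ^ 2)) := by
  induction p using Polynomial.induction_on' with
  | add p q hp hq => simpa [add_mul, Pi.add_def] using hp.add hq
  | monomial n a =>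
      have := (L1 n hb).const_mul a
      simpa [mul_assoc] using this

lemma L3 (p : Polynomial ℝ) (x : ℝ) :
    Integrable (fun y : ℝ => p.eval y * Real.exp (x * y - y ^ 2 / 2)) := by
  have key : ∀ y : ℝ, Real.exp (x * y - y ^ 2 / 2)
      = Real.exp (x ^ 2 / 2) * Real.exp (-(1/2 : ℝ) * (y - x) ^ 2) := by
    intro y; rw [← Real.exp_add]; ring_nf
  have h2 : Integrable (fun u : ℝ => (p.comp (Polynomial.X + Polynomial.C x)).eval u
      * Real.exp (-(1/2 : ℝ) * u ^ 2)) := L2 _ (by norm_num)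
  have h3 := (h2.comp_sub_right x).const_mul (Real.exp (x ^ 2 / 2))
  refine h3.congr ?_
  filter_upwards with y
  simp only [Polynomial.eval_comp, Polynomial.eval_add, Polynomial.eval_X, Polynomial.eval_C]
  rw [key y]; ring_nf


lemma gauss_density : gaussianReal 0 1
    = (volume : Measure ℝ).withDensity (fun y => ((gaussianPDFReal 0 1 y).toNNReal : ℝ≥0∞)) := by
  rw [gaussianReal_of_var_ne_zero 0 one_ne_zero]
  rfl

lemma L4 (f : ℝ → ℝ) :
    ∫ y, f y ∂(gaussianReal 0 1) = ∫ y, f y * gaussianPDFReal 0 1 y := by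
  rw [gauss_density]
  rw [integral_withDensity_eq_integral_smul
    ((measurable_gaussianPDFReal 0 1).real_toNNReal) f]
  congr 1; funext y
  rw [NNReal.smul_def, smul_eq_mul, Real.coe_toNNReal _ (gaussianPDFReal_nonneg 0 1 y), mul_comm]

lemma L5 {f : ℝ → ℝ} :
    Integrable f (gaussianReal 0 1) ↔ Integrable (fun y => f y * gaussianPDFReal 0 1 y) := by
  rw [gauss_density,
    integrable_withDensity_iff_integrable_smul ((measurable_gaussianPDFReal 0 1).real_toNNReal)]
  refine integrable_congr ?_
  filter_upwards with y
  rw [NNReal.smul_def, smul_eq_mul, Real.coe_toNNReal _ (gaussianPDFReal_nonneg 0 1 y), mul_comm]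

lemma pdf01 (y : ℝ) : gaussianPDFReal 0 1 y = (√(2 * π))⁻¹ * Real.exp (-(y ^ 2) / 2) := by
  simp [gaussianPDFReal]

lemma L6 (p : Polynomial ℝ) (x : ℝ) :
    Integrable (fun y => p.eval y * Real.exp (x * y)) (gaussianReal 0 1) := by
  rw [L5]
  have := ((L3 p x).const_mul ((√(2 * π))⁻¹))
  refine this.congr ?_
  filter_upwards with y
  rw [pdf01]
  rw [show x * y - y ^ 2 / 2 = x * y + (-(y ^ 2) / 2) by ring, Real.exp_add]
  ring

lemma L7 (x : ℝ) : ∫ y, Real.exp (x * y) ∂(gaussianReal 0 1) = Real.exp (x ^ 2 / 2) := by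
  rw [L4]
  have key : ∀ y : ℝ, Real.exp (x * y) * gaussianPDFReal 0 1 y
      = Real.exp (x ^ 2 / 2) * gaussianPDFReal x 1 y := by
    intro y
    simp only [gaussianPDFReal, NNReal.coe_one, mul_one, sub_zero]
    rw [mul_left_comm, mul_left_comm (Real.exp (x ^ 2 / 2))]
    congr 1
    rw [← Real.exp_add, ← Real.exp_add]
    congr 1
    ring
  simp_rw [key]
  rw [integral_const_mul, integral_gaussianPDFReal_eq_one x one_ne_zero, mul_one]


lemma T0 (q : Polynomial ℝ) :
    Tendsto (fun y : ℝ => q.eval y * Real.exp (-(y ^ 2) / 2)) atTop (nhds 0) := by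
  rw [tendsto_zero_iff_norm_tendsto_zero]
  refine squeeze_zero' (g := fun y => ‖q.eval y / Real.exp y‖)
    (Eventually.of_forall fun y => norm_nonneg _) ?_ ?_
  · filter_upwards [eventually_ge_atTop (2 : ℝ)] with y hy
    have h1 : Real.exp (-(y ^ 2) / 2) ≤ Real.exp (-y) := by
      apply Real.exp_le_exp.2; nlinarith
    calc ‖q.eval y * Real.exp (-(y ^ 2) / 2)‖
        = ‖q.eval y‖ * Real.exp (-(y ^ 2) / 2) := by
          rw [norm_mul, Real.norm_eq_abs (Real.exp _), abs_of_pos (Real.exp_pos _)]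
      _ ≤ ‖q.eval y‖ * Real.exp (-y) := mul_le_mul_of_nonneg_left h1 (norm_nonneg _)
      _ = ‖q.eval y / Real.exp y‖ := by
          rw [norm_div, Real.norm_eq_abs (Real.exp y), abs_of_pos (Real.exp_pos _),
            Real.exp_neg, div_eq_mul_inv]
  · exact (tendsto_zero_iff_norm_tendsto_zero).1 (q.tendsto_div_exp_atTop)

lemma T0' (q : Polynomial ℝ) :
    Tendsto (fun y : ℝ => q.eval y * Real.exp (-(y ^ 2) / 2)) atBot (nhds 0) := by
  have h := (T0 (q.comp (-Polynomial.X))).comp tendsto_neg_atBot_atTop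
  refine h.congr fun y => ?_
  simp [Polynomial.eval_comp, Function.comp]

lemma Ttop (p : Polynomial ℝ) (x : ℝ) :
    Tendsto (fun y : ℝ => p.eval y * Real.exp (x * y - y ^ 2 / 2)) atTop (nhds 0) := by
  have key : ∀ y : ℝ, p.eval y * Real.exp (x * y - y ^ 2 / 2)
      = Real.exp (x ^ 2 / 2) * ((p.comp (Polynomial.X + Polynomial.C x)).eval (y - x)
        * Real.exp (-((y - x) ^ 2) / 2)) := by
    intro y
    simp only [Polynomial.eval_comp, Polynomial.eval_add, Polynomial.eval_X, Polynomial.eval_C,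
      sub_add_cancel]
    rw [mul_left_comm]
    congr 1
    rw [← Real.exp_add]
    congr 1
    ring
  simp_rw [key]
  have h := ((T0 (p.comp (Polynomial.X + Polynomial.C x))).comp
    (tendsto_atTop_add_const_right atTop (-x) tendsto_id)).const_mul (Real.exp (x ^ 2 / 2))
  simpa [Function.comp, sub_eq_add_neg] using h

lemma Tbot (p : Polynomial ℝ) (x : ℝ) :
    Tendsto (fun y : ℝ => p.eval y * Real.exp (x * y - y ^ 2 / 2)) atBot (nhds 0) := by
  have key : ∀ y : ℝ, p.eval y * Real.exp (x * y - y ^ 2 / 2)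
      = Real.exp (x ^ 2 / 2) * ((p.comp (Polynomial.X + Polynomial.C x)).eval (y - x)
        * Real.exp (-((y - x) ^ 2) / 2)) := by
    intro y
    simp only [Polynomial.eval_comp, Polynomial.eval_add, Polynomial.eval_X, Polynomial.eval_C,
      sub_add_cancel]
    rw [mul_left_comm]
    congr 1
    rw [← Real.exp_add]
    congr 1
    ring
  simp_rw [key]
  have h := ((T0' (p.comp (Polynomial.X + Polynomial.C x))).comp
    (tendsto_atBot_add_const_right atBot (-x) tendsto_id)).const_mul (Real.exp (x ^ 2 / 2))
  simpa [Function.comp, sub_eq_add_neg] using h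

lemma ibp_zero (p : Polynomial ℝ) (x : ℝ) :
    ∫ y : ℝ, (p.derivative + (Polynomial.C x - Polynomial.X) * p).eval y
      * Real.exp (x * y - y ^ 2 / 2) = 0 := by
  set r := p.derivative + (Polynomial.C x - Polynomial.X) * p with hr
  set g := fun y : ℝ => p.eval y * Real.exp (x * y - y ^ 2 / 2) with hgdef
  have hexp : ∀ y : ℝ, HasDerivAt (fun y : ℝ => x * y - y ^ 2 / 2) (x - y) y := by
    intro y
    have h1 := ((hasDerivAt_id y).const_mul x).sub ((hasDerivAt_pow 2 y).div_const 2)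
    refine h1.congr_deriv (Eq.symm ?_)
    simp
  have hg : ∀ y : ℝ, HasDerivAt g (r.eval y * Real.exp (x * y - y ^ 2 / 2)) y := by
    intro y
    have h1 := (p.hasDerivAt y).mul (hexp y).exp
    refine h1.congr_deriv (Eq.symm ?_)
    simp only [hr, Polynomial.eval_add, Polynomial.eval_mul, Polynomial.eval_sub,
      Polynomial.eval_C, Polynomial.eval_X]
    ring
  have hint : Integrable (fun y : ℝ => r.eval y * Real.exp (x * y - y ^ 2 / 2)) := L3 r x
  have htop : Tendsto g atTop (nhds 0) := Ttop p x
  have hbot : Tendsto g atBot (nhds 0) := Tbot p x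
  have h1 : ∫ y in Set.Ioi (0:ℝ), r.eval y * Real.exp (x * y - y ^ 2 / 2) = 0 - g 0 :=
    MeasureTheory.integral_Ioi_of_hasDerivAt_of_tendsto' (fun y _ => hg y)
      hint.integrableOn htop
  have h2 : ∫ y in Set.Iic (0:ℝ), r.eval y * Real.exp (x * y - y ^ 2 / 2) = g 0 - 0 :=
    MeasureTheory.integral_Iic_of_hasDerivAt_of_tendsto' (fun y _ => hg y)
      hint.integrableOn hbot
  rw [← intervalIntegral.integral_Iic_add_Ioi (b := (0:ℝ)) hint.integrableOn hint.integrableOn, h1, h2]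
  ring

lemma step (p : Polynomial ℝ) (x : ℝ) :
    ∫ y, (Polynomial.X * p - p.derivative).eval y * Real.exp (x * y) ∂(gaussianReal 0 1)
      = x * ∫ y, p.eval y * Real.exp (x * y) ∂(gaussianReal 0 1) := by
  rw [L4, L4]
  have conv : ∀ (q : Polynomial ℝ) (y : ℝ), q.eval y * Real.exp (x * y) * gaussianPDFReal 0 1 y
      = (√(2 * π))⁻¹ * (q.eval y * Real.exp (x * y - y ^ 2 / 2)) := by
    intro q y
    rw [pdf01, show x * y - y ^ 2 / 2 = x * y + (-(y ^ 2) / 2) by ring, Real.exp_add]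
    ring
  simp_rw [conv]
  rw [integral_const_mul, integral_const_mul, ← mul_assoc, mul_comm x, mul_assoc]
  congr 1
  have key : ∀ y : ℝ, (Polynomial.X * p - p.derivative).eval y * Real.exp (x * y - y ^ 2 / 2)
      = x * (p.eval y * Real.exp (x * y - y ^ 2 / 2))
        - (p.derivative + (Polynomial.C x - Polynomial.X) * p).eval y
          * Real.exp (x * y - y ^ 2 / 2) := by
    intro y
    simp only [Polynomial.eval_mul, Polynomial.eval_sub, Polynomial.eval_add, Polynomial.eval_X,
      Polynomial.eval_C]
    ring
  simp_rw [key]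
  rw [integral_sub ((L3 p x).const_mul x) (L3 _ x), ibp_zero, sub_zero, integral_const_mul]

lemma hermite_ip (k : ℕ) (x : ℝ) :
    ∫ y, (_root_.hermite k).eval y * Real.exp (x * y) ∂(gaussianReal 0 1)
      = x ^ k * Real.exp (x ^ 2 / 2) := by
  induction k with
  | zero => simpa [_root_.hermite] using L7 x
  | succ k ih =>
      rw [show _root_.hermite (k + 1) = Polynomial.X * _root_.hermite k - Polynomial.derivative (_root_.hermite k) from rfl,
        step, ih]
      ring

lemma oneD (k : ℕ) (x : ℝ) :
    ∫ y, Real.exp (-(x ^ 2) / 2 + x * y) * (_root_.hermite k).eval y ∂(gaussianReal 0 1) = x ^ k := by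
  have : ∀ y : ℝ, Real.exp (-(x ^ 2) / 2 + x * y) * (_root_.hermite k).eval y
      = Real.exp (-(x ^ 2) / 2) * ((_root_.hermite k).eval y * Real.exp (x * y)) := by
    intro y; rw [Real.exp_add]; ring
  simp_rw [this]
  rw [integral_const_mul, hermite_ip]
  have h1 : Real.exp (-(x ^ 2) / 2) * Real.exp (x ^ 2 / 2) = 1 := by
    rw [← Real.exp_add, show -(x ^ 2) / 2 + x ^ 2 / 2 = 0 by ring, Real.exp_zero]
  calc Real.exp (-(x ^ 2) / 2) * (x ^ k * Real.exp (x ^ 2 / 2))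
      = Real.exp (-(x ^ 2) / 2) * Real.exp (x ^ 2 / 2) * x ^ k := by ring
    _ = x ^ k := by rw [h1, one_mul]

lemma pi_integral {N : ℕ} (f : Fin N → ℝ → ℝ) :
    ∫ y : Fin N → ℝ, ∏ i, f i (y i) ∂(Measure.pi fun _ => gaussianReal 0 1)
      = ∏ i, ∫ y, f i y ∂(gaussianReal 0 1) := by
  letI : MeasureSpace ℝ := ⟨gaussianReal 0 1⟩
  haveI : SigmaFinite (volume : Measure ℝ) :=
    (inferInstance : SigmaFinite (gaussianReal 0 1))
  exact MeasureTheory.integral_fintype_prod_eq_prod f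


end Helpers

/-- In the additive Gaussian noise model, `⟨L, H_α⟩ = E_{X∼μ}[∏ X_i^{α_i}]`:
the Hermite coefficients of the likelihood ratio are the moments of the prior. -/
theorem stmt10 (N : ℕ) (μ : Measure (Fin N → ℝ)) [IsProbabilityMeasure μ]
    (Q : Measure (Fin N → ℝ)) (hQ : Q = Measure.pi fun _ => gaussianReal 0 1)
    (L : (Fin N → ℝ) → ℝ)
    (hLint : ∀ Y : Fin N → ℝ, Integrable (fun X => Real.exp (-(∑ i, X i ^ 2) / 2 + ∑ i, X i * Y i)) μ)
    (hL : ∀ Y : Fin N → ℝ, L Y = ∫ X, Real.exp (-(∑ i, X i ^ 2) / 2 + ∑ i, X i * Y i) ∂μ)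
    (α : Fin N → ℕ)
    (hmom : Integrable (fun X => ∏ i, X i ^ α i) μ)
    (hint : Integrable (fun Y => L Y * ∏ i, (hermite (α i)).eval (Y i)) Q) :
    ∫ Y, L Y * ∏ i, (hermite (α i)).eval (Y i) ∂Q
      = ∫ X, ∏ i, X i ^ α i ∂μ := by
  subst hQ
  set Q : Measure (Fin N → ℝ) := Measure.pi fun _ => gaussianReal 0 1 with hQdef
  set f : (Fin N → ℝ) × (Fin N → ℝ) → ℝ := fun z =>
    Real.exp (-(∑ i, z.1 i ^ 2) / 2 + ∑ i, z.1 i * z.2 i)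
      * ∏ i, (_root_.hermite (α i)).eval (z.2 i) with hfdef
  have hcont : Continuous f := by
    apply Continuous.mul
    · apply Real.continuous_exp.comp
      apply Continuous.add
      · exact (Continuous.div_const (Continuous.neg (continuous_finset_sum _ fun i _ =>
          ((continuous_apply i).comp continuous_fst).pow 2)) 2)
      · exact continuous_finset_sum _ fun i _ =>
          ((continuous_apply i).comp continuous_fst).mul
            ((continuous_apply i).comp continuous_snd)
    · exact continuous_finset_prod _ fun i _ =>
        ((_root_.hermite (α i)).continuous).comp ((continuous_apply i).comp continuous_snd)
  have hmeas : AEStronglyMeasurable f (μ.prod Q) := hcont.aestronglyMeasurable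
  have hLnonneg : ∀ Y, 0 ≤ L Y := fun Y => (hL Y) ▸
    integral_nonneg (fun X => (Real.exp_pos _).le)
  have hnorm : ∀ Y, (∫ X, ‖f (X, Y)‖ ∂μ)
      = L Y * |∏ i, (_root_.hermite (α i)).eval (Y i)| := by
    intro Y
    have h1 : ∀ X : Fin N → ℝ, ‖f (X, Y)‖
        = Real.exp (-(∑ i, X i ^ 2) / 2 + ∑ i, X i * Y i)
          * |∏ i, (_root_.hermite (α i)).eval (Y i)| := by
      intro X
      rw [hfdef]
      simp only [Real.norm_eq_abs, abs_mul, abs_of_pos (Real.exp_pos _)]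
    simp_rw [h1]
    rw [integral_mul_const, hL Y]
  have hfint : Integrable f (μ.prod Q) := by
    rw [integrable_prod_iff' hmeas]
    constructor
    · filter_upwards with Y
      simpa [hfdef] using (hLint Y).mul_const (∏ i, (_root_.hermite (α i)).eval (Y i))
    · refine hint.abs.congr ?_
      filter_upwards with Y
      rw [abs_mul, abs_of_nonneg (hLnonneg Y), ← hnorm Y]
  have swap := MeasureTheory.integral_integral_swap (f := fun X Y => f (X, Y)) hfint
  calc ∫ Y, L Y * ∏ i, (_root_.hermite (α i)).eval (Y i) ∂Q
      = ∫ Y, ∫ X, f (X, Y) ∂μ ∂Q := by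
        refine integral_congr_ae (Filter.Eventually.of_forall fun Y => ?_)
        simp only [hfdef]
        rw [hL Y, ← integral_mul_const]
    _ = ∫ X, ∫ Y, f (X, Y) ∂Q ∂μ := swap.symm
    _ = ∫ X, ∏ i, X i ^ α i ∂μ := by
        refine integral_congr_ae (Filter.Eventually.of_forall fun X => ?_)
        have h1 : ∀ Y : Fin N → ℝ, f (X, Y) = ∏ i,
            (Real.exp (-(X i ^ 2) / 2 + X i * Y i)
              * (_root_.hermite (α i)).eval (Y i)) := by
          intro Y
          simp only [hfdef]
          rw [Finset.prod_mul_distrib]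
          congr 1
          rw [← Real.exp_sum]
          congr 1
          rw [Finset.sum_add_distrib]
          congr 1
          rw [neg_div, ← Finset.sum_div]
          simp [neg_div, Finset.sum_div]
        show (∫ Y, f (X, Y) ∂Q) = ∏ i, X i ^ α i
        rw [integral_congr_ae (Filter.Eventually.of_forall h1)]
        rw [pi_integral (fun i => fun y : ℝ =>
          Real.exp (-(X i ^ 2) / 2 + X i * y) * (_root_.hermite (α i)).eval y)]
        exact Finset.prod_congr rfl fun i _ => oneD (α i) (X i)
end

section
/- Consider the order-p spiked tensor model with Rademacher prior: ‖L_n^{≤D}‖² = Σ_{d=0}^D (λ^{2d}/d!) E[⟨x¹,x²⟩^{pd}] where x¹,x² are i.i.d. uniform on {±1}^n. If λ ≤ (1/√2) p^{−p/4−1/2} n^{−p/4} D^{(2−p)/4} for all sufficiently large n, then ‖L_n^{≤D}‖² is bounded as n → ∞ (with p fixed). -/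
/-!
Let `X = ⟨x¹, x²⟩`. Since `rad` is the image of the uniform measure on `Bool`, every expectation
is a uniform average over pairs of sign vectors, and there `E[e^{cX}] = cosh(c)^n ≤ e^{nc²/2}`.
The bound `y^m ≤ (m/e)^m e^y` at `y = t|X|`, `t = √(m/n)`, turns this into the moment bound
`E|X|^m ≤ 2 (mn/e)^{m/2}`. For `m = pd` the assumed size of `λ` makes the `d`-th term at most
`2 d^d / (d! (2e)^d) ≤ 2 · 2^{-d}`, so the whole sum is at most `4`.
-/

open MeasureTheory Filter

noncomputable def rad : Measure ℝ :=
  (2⁻¹ : ENNReal) • (Measure.dirac 1 + Measure.dirac (-1))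

open Real

def boolSign (b : Bool) : ℝ := if b then 1 else -1

lemma rad_eq_map : rad = (PMF.uniformOfFintype Bool).toMeasure.map boolSign := by
  ext s hs
  rw [Measure.map_apply .of_discrete hs, PMF.toMeasure_apply_fintype]
  by_cases h1 : (1 : ℝ) ∈ s <;> by_cases h2 : (-1 : ℝ) ∈ s <;>
    simp [rad, Measure.dirac_apply', hs, Set.indicator, boolSign, h1, h2]

lemma integral_prod_pi_rad_eq_sum {n : ℕ} (F : (Fin n → ℝ) × (Fin n → ℝ) → ℝ)
    (hF : Continuous F) :
    ∫ q, F q ∂((Measure.pi fun _ : Fin n => rad).prod (Measure.pi fun _ : Fin n => rad)) =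
      ((4 : ℝ) ^ n)⁻¹ * ∑ u : (Fin n → Bool) × (Fin n → Bool),
        F (fun i => boolSign (u.1 i), fun i => boolSign (u.2 i)) := by
  have hmeas : Measurable (fun s : Fin n → Bool => fun i => boolSign (s i)) := .of_discrete
  have hpi : Measure.pi (fun _ : Fin n => rad) =
      (Measure.pi fun _ => (PMF.uniformOfFintype Bool).toMeasure).map
        (fun s i => boolSign (s i)) := by
    simp only [rad_eq_map]
    exact (Measure.pi_map_pi fun _ => measurable_from_top.aemeasurable).symm
  rw [hpi, Measure.map_prod_map _ _ hmeas hmeas,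
    integral_map (hmeas.prodMap hmeas).aemeasurable hF.aestronglyMeasurable,
    integral_fintype .of_finite, Finset.mul_sum]
  refine Finset.sum_congr rfl fun u _ => ?_
  rw [smul_eq_mul, ← Set.singleton_prod_singleton, measureReal_def, Measure.prod_prod]
  congr 1
  norm_num [← mul_pow, ← inv_pow]

lemma sum_exp_mul_boolSign_mul (a : Bool) (c : ℝ) :
    ∑ b, exp (c * (boolSign a * boolSign b)) = 2 * cosh c := by
  cases a <;> simp [boolSign, cosh_eq] <;> ring

lemma sum_exp_mul_sum_boolSign_mul (n : ℕ) (c : ℝ) :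
    ∑ u : (Fin n → Bool) × (Fin n → Bool),
        exp (c * ∑ i, boolSign (u.1 i) * boolSign (u.2 i)) = 4 ^ n * cosh c ^ n := by
  have hinner (s : Fin n → Bool) :
      ∑ t : Fin n → Bool, exp (c * ∑ i, boolSign (s i) * boolSign (t i)) = (2 * cosh c) ^ n := by
    calc ∑ t : Fin n → Bool, exp (c * ∑ i, boolSign (s i) * boolSign (t i))
        = ∑ t : Fin n → Bool, ∏ i, exp (c * (boolSign (s i) * boolSign (t i))) := by
          simp_rw [Finset.mul_sum, exp_sum]
      _ = ∏ i, ∑ b, exp (c * (boolSign (s i) * boolSign b)) :=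
          (Fintype.prod_sum fun i b => exp (c * (boolSign (s i) * boolSign b))).symm
      _ = (2 * cosh c) ^ n := by
          simp only [sum_exp_mul_boolSign_mul, Finset.prod_const, Finset.card_fin]
  rw [Fintype.sum_prod_type]
  norm_num [hinner, ← mul_assoc, ← mul_pow]

lemma pow_le_div_exp_pow_mul_exp (m : ℕ) {y : ℝ} (hy : 0 ≤ y) :
    y ^ m ≤ (m / exp 1) ^ m * exp y := by
  rcases m.eq_zero_or_pos with rfl | hm
  · simpa using hy
  have hm' : (0 : ℝ) < m := by exact_mod_cast hm
  have key : y / m ≤ exp (y / m - 1) := by simpa using add_one_le_exp (y / m - 1)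
  calc y ^ m = (m * (y / m)) ^ m := by field_simp
    _ ≤ (m * exp (y / m - 1)) ^ m := by gcongr
    _ = (m / exp 1) ^ m * exp y := by
      rw [exp_sub, mul_div_left_comm, mul_pow, ← exp_nat_mul, mul_comm]
      field_simp

lemma abs_pow_le_mul_exp_add_exp (m : ℕ) {t : ℝ} (ht : 0 < t) (x : ℝ) :
    |x| ^ m ≤ (m / exp 1) ^ m / t ^ m * (exp (t * x) + exp (-(t * x))) := by
  have hexp : exp (t * |x|) ≤ exp (t * x) + exp (-(t * x)) := by
    rcases abs_cases x with ⟨hx, -⟩ | ⟨hx, -⟩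
    · rw [hx]; linarith [exp_pos (-(t * x))]
    · rw [hx, mul_neg]; linarith [exp_pos (t * x)]
  rw [div_mul_eq_mul_div, le_div_iff₀ (by positivity), mul_comm, ← mul_pow]
  calc (t * |x|) ^ m ≤ (m / exp 1) ^ m * exp (t * |x|) :=
        pow_le_div_exp_pow_mul_exp m (by positivity)
    _ ≤ _ := by gcongr

lemma sum_abs_pow_le_of_sum_exp_le {ι : Type*} [Fintype ι] (X : ι → ℝ) {C v : ℝ} (hv : 0 < v)
    (hX : ∀ c, ∑ u, exp (c * X u) ≤ C * exp (v * c ^ 2 / 2)) (m : ℕ) :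
    ∑ u, |X u| ^ m ≤ 2 * C * √(m * v / exp 1) ^ m := by
  rcases m.eq_zero_or_pos with rfl | hm
  · have := hX 0
    norm_num at this ⊢
    linarith [(Fintype.card ι).cast_nonneg (α := ℝ)]
  have hm' : (0 : ℝ) < m := by exact_mod_cast hm
  set t := √(m / v)
  have ht : 0 < t := sqrt_pos.mpr (by positivity)
  have ht2 : v * t ^ 2 = m := by rw [sq_sqrt (by positivity)]; field_simp
  have hopt : (m / exp 1) / t * exp (1 / 2) = √(m * v / exp 1) := by
    have he : exp (1 / 2) * exp (1 / 2) = exp 1 := by rw [← exp_add]; norm_num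
    have htt : t * t = m / v := mul_self_sqrt (by positivity)
    rw [eq_comm, sqrt_eq_iff_mul_self_eq_of_pos (by positivity)]
    calc (m / exp 1) / t * exp (1 / 2) * ((m / exp 1) / t * exp (1 / 2))
        = (m / exp 1) ^ 2 * (exp (1 / 2) * exp (1 / 2)) / (t * t) := by ring
      _ = m * v / exp 1 := by
        rw [he, htt]
        field_simp
  calc ∑ u, |X u| ^ m
      ≤ ∑ u, (m / exp 1) ^ m / t ^ m * (exp (t * X u) + exp (-t * X u)) := by
        gcongr with u
        rw [neg_mul]
        exact abs_pow_le_mul_exp_add_exp m ht (X u)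
    _ = (m / exp 1) ^ m / t ^ m * (∑ u, exp (t * X u) + ∑ u, exp (-t * X u)) := by
        rw [← Finset.sum_add_distrib, Finset.mul_sum]
    _ ≤ (m / exp 1) ^ m / t ^ m * (2 * C * exp (v * t ^ 2 / 2)) := by
        gcongr
        have := hX (-t)
        rw [neg_sq] at this
        linarith [hX t]
    _ = 2 * C * √(m * v / exp 1) ^ m := by
        rw [← hopt, mul_pow, div_pow _ t, ← exp_nat_mul, ht2, mul_one_div]
        ring

lemma integral_inner_pow_le {n : ℕ} (hn : 0 < n) (m : ℕ) :
    ∫ q, (∑ i, q.1 i * q.2 i) ^ m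
        ∂((Measure.pi fun _ : Fin n => rad).prod (Measure.pi fun _ : Fin n => rad)) ≤
      2 * √(m * n / exp 1) ^ m := by
  have hmgf (c : ℝ) : ∑ u : (Fin n → Bool) × (Fin n → Bool),
      exp (c * ∑ i, boolSign (u.1 i) * boolSign (u.2 i)) ≤ 4 ^ n * exp (n * c ^ 2 / 2) := by
    rw [sum_exp_mul_sum_boolSign_mul, mul_div_assoc, exp_nat_mul]
    gcongr
    exact cosh_le_exp_half_sq c
  have hmoment := sum_abs_pow_le_of_sum_exp_le _ (by exact_mod_cast hn) hmgf m
  rw [integral_prod_pi_rad_eq_sum _ (by fun_prop)]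
  calc ((4 : ℝ) ^ n)⁻¹ * ∑ u : (Fin n → Bool) × (Fin n → Bool),
        (∑ i, boolSign (u.1 i) * boolSign (u.2 i)) ^ m
      ≤ ((4 : ℝ) ^ n)⁻¹ * ∑ u : (Fin n → Bool) × (Fin n → Bool),
        |∑ i, boolSign (u.1 i) * boolSign (u.2 i)| ^ m := by
        refine mul_le_mul_of_nonneg_left (Finset.sum_le_sum fun u _ => ?_) (by positivity)
        exact (le_abs_self _).trans (abs_pow _ m).le
    _ ≤ ((4 : ℝ) ^ n)⁻¹ * (2 * 4 ^ n * √(m * n / exp 1) ^ m) := by gcongr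
    _ = 2 * √(m * n / exp 1) ^ m := by field_simp

lemma rpow_neg_div_four_pow_four_mul_pow {x : ℝ} (hx : 0 < x) (k : ℕ) :
    (x ^ (-(k : ℝ) / 4)) ^ 4 * x ^ k = 1 := by
  rw [← rpow_natCast (x ^ _) 4, ← rpow_mul hx.le, ← rpow_natCast x k, ← rpow_add hx]
  norm_num

lemma four_mul_pow_four_mul_le_one {p D n : ℕ} (hp : 2 ≤ p) (hD : 0 < D) (hn : 0 < n) {l : ℝ}
    (hl0 : 0 ≤ l) (hl : l ≤ 1 / √2 * (p : ℝ) ^ (-(p : ℝ) / 4 - 1 / 2) *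
      (n : ℝ) ^ (-(p : ℝ) / 4) * (D : ℝ) ^ ((2 - (p : ℝ)) / 4)) :
    4 * l ^ 4 * ((p : ℝ) ^ (p + 2) * (n : ℝ) ^ p * (D : ℝ) ^ (p - 2)) ≤ 1 := by
  obtain ⟨k, rfl⟩ := Nat.exists_eq_add_of_le' hp
  have hexp_p : -((k + 2 : ℕ) : ℝ) / 4 - 1 / 2 = -((k + 2 + 2 : ℕ) : ℝ) / 4 := by push_cast; ring
  have hexp_D : (2 - ((k + 2 : ℕ) : ℝ)) / 4 = -(k : ℝ) / 4 := by push_cast; ring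
  rw [hexp_p, hexp_D] at hl
  have hsqrt : (1 / √2 : ℝ) ^ 4 = 1 / 4 := by
    rw [div_pow, one_pow, show (4 : ℕ) = 2 * 2 from rfl, pow_mul, sq_sqrt zero_le_two]
    norm_num
  calc 4 * l ^ 4 * (((k + 2 : ℕ) : ℝ) ^ (k + 2 + 2) * (n : ℝ) ^ (k + 2) * (D : ℝ) ^ (k + 2 - 2))
      ≤ 4 * (1 / √2 * ((k + 2 : ℕ) : ℝ) ^ (-((k + 2 + 2 : ℕ) : ℝ) / 4) *
          (n : ℝ) ^ (-((k + 2 : ℕ) : ℝ) / 4) * (D : ℝ) ^ (-(k : ℝ) / 4)) ^ 4 *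
          (((k + 2 : ℕ) : ℝ) ^ (k + 2 + 2) * (n : ℝ) ^ (k + 2) * (D : ℝ) ^ k) := by
        rw [Nat.add_sub_cancel]
        gcongr
    _ = 4 * (1 / √2) ^ 4 *
          (((((k + 2 : ℕ) : ℝ) ^ (-((k + 2 + 2 : ℕ) : ℝ) / 4)) ^ 4 *
            ((k + 2 : ℕ) : ℝ) ^ (k + 2 + 2)) *
          (((n : ℝ) ^ (-((k + 2 : ℕ) : ℝ) / 4)) ^ 4 * (n : ℝ) ^ (k + 2)) *
          (((D : ℝ) ^ (-(k : ℝ) / 4)) ^ 4 * (D : ℝ) ^ k)) := by ring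
    _ = 1 := by
        rw [rpow_neg_div_four_pow_four_mul_pow (by positivity),
          rpow_neg_div_four_pow_four_mul_pow (by positivity),
          rpow_neg_div_four_pow_four_mul_pow (by positivity), hsqrt]
        norm_num

lemma sq_mul_sqrt_pow_le {p d D n : ℕ} (hp : 2 ≤ p) (hdD : d ≤ D) {l : ℝ}
    (h : 4 * l ^ 4 * ((p : ℝ) ^ (p + 2) * (n : ℝ) ^ p * (D : ℝ) ^ (p - 2)) ≤ 1) :
    l ^ 2 * √(p * d * n / exp 1) ^ p ≤ d / (2 * exp 1) := by
  have hd_pow : (d : ℝ) ^ p ≤ d ^ 2 * (D : ℝ) ^ (p - 2) := by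
    rw [← Nat.add_sub_cancel' hp, pow_add, Nat.add_sub_cancel_left]
    gcongr
  have he : exp 1 ^ 2 ≤ exp 1 ^ p := pow_le_pow_right₀ (one_le_exp zero_le_one) hp
  have hp_pow : (p : ℝ) ^ p ≤ (p : ℝ) ^ (p + 2) :=
    pow_le_pow_right₀ (by exact_mod_cast (by omega : 1 ≤ p)) (by omega)
  refine (pow_le_pow_iff_left₀ (by positivity) (by positivity) two_ne_zero).mp ?_
  calc (l ^ 2 * √(p * d * n / exp 1) ^ p) ^ 2
      = l ^ 4 * ((p : ℝ) ^ p * (n : ℝ) ^ p) * (d : ℝ) ^ p / exp 1 ^ p := by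
        rw [mul_pow, ← pow_mul, pow_right_comm, sq_sqrt (by positivity)]
        ring
    _ ≤ l ^ 4 * ((p : ℝ) ^ (p + 2) * (n : ℝ) ^ p) * (d ^ 2 * (D : ℝ) ^ (p - 2)) / exp 1 ^ 2 := by
        gcongr
    _ = 4 * l ^ 4 * ((p : ℝ) ^ (p + 2) * (n : ℝ) ^ p * (D : ℝ) ^ (p - 2)) *
          (d / (2 * exp 1)) ^ 2 := by
        ring
    _ ≤ (d / (2 * exp 1)) ^ 2 := mul_le_of_le_one_left (sq_nonneg _) h

lemma two_div_factorial_mul_pow_le (d : ℕ) :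
    2 / d.factorial * (d / (2 * exp 1)) ^ d ≤ 2 * (1 / 2) ^ d := by
  have h := pow_div_factorial_le_exp (d : ℝ) d.cast_nonneg d
  rw [div_le_iff₀ (by positivity)] at h
  rw [div_pow, mul_pow, ← exp_nat_mul, mul_one, div_mul_div_comm, div_le_iff₀ (by positivity)]
  calc 2 * (d : ℝ) ^ d ≤ 2 * (exp d * d.factorial) := by gcongr
    _ = 2 * (1 / 2) ^ d * (d.factorial * (2 ^ d * exp d)) := by
        rw [one_div, inv_pow]
        field_simp

lemma pow_div_factorial_mul_integral_inner_pow_le {p d D n : ℕ} (hp : 2 ≤ p) (hdD : d ≤ D)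
    (hn : 0 < n) {l : ℝ} (hl0 : 0 ≤ l)
    (hl : l ≤ 1 / √2 * (p : ℝ) ^ (-(p : ℝ) / 4 - 1 / 2) *
      (n : ℝ) ^ (-(p : ℝ) / 4) * (D : ℝ) ^ ((2 - (p : ℝ)) / 4)) :
    l ^ (2 * d) / d.factorial * ∫ q, (∑ i, q.1 i * q.2 i) ^ (p * d)
        ∂((Measure.pi fun _ : Fin n => rad).prod (Measure.pi fun _ : Fin n => rad)) ≤
      2 * (1 / 2) ^ d := by
  have hbase : (l ^ 2 * √(p * d * n / exp 1) ^ p) ^ d ≤ (d / (2 * exp 1)) ^ d := by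
    rcases d.eq_zero_or_pos with rfl | hd
    · simp
    exact pow_le_pow_left₀ (by positivity) (sq_mul_sqrt_pow_le hp hdD
      (four_mul_pow_four_mul_le_one hp (hd.trans_le hdD) hn hl0 hl)) d
  calc l ^ (2 * d) / d.factorial * ∫ q, (∑ i, q.1 i * q.2 i) ^ (p * d)
        ∂((Measure.pi fun _ : Fin n => rad).prod (Measure.pi fun _ : Fin n => rad))
      ≤ l ^ (2 * d) / d.factorial * (2 * √((p * d : ℕ) * n / exp 1) ^ (p * d)) := by
        gcongr
        exact integral_inner_pow_le hn (p * d)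
    _ = 2 / d.factorial * (l ^ 2 * √(p * d * n / exp 1) ^ p) ^ d := by
        push_cast
        ring
    _ ≤ 2 / d.factorial * (d / (2 * exp 1)) ^ d := by gcongr
    _ ≤ 2 * (1 / 2) ^ d := two_div_factorial_mul_pow_le d

/-- Spiked tensor model, LDLR upper bound: with
`‖L_n^{≤D}‖² = Σ_{d=0}^D (λ^{2d}/d!) E[⟨x¹,x²⟩^{pd}]` over Rademacher vectors,
if `λ ≤ (1/√2) p^{−p/4−1/2} n^{−p/4} D^{(2−p)/4}` for all large `n`,
then `‖L_n^{≤D}‖²` remains bounded as `n → ∞`. -/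
theorem stmt15 (p : ℕ) (hp : 2 ≤ p) (D : ℕ → ℕ) (lam : ℕ → ℝ)
    (hlam : ∀ n, 0 < lam n)
    (S : ℕ → ℝ)
    (hS : ∀ n, S n = ∑ d ∈ Finset.range (D n + 1),
      (lam n) ^ (2 * d) / (Nat.factorial d : ℝ) *
        ∫ q, (∑ i, q.1 i * q.2 i) ^ (p * d)
          ∂((Measure.pi fun _ : Fin n => rad).prod (Measure.pi fun _ : Fin n => rad)))
    (hbound : ∀ᶠ n in atTop,
      lam n ≤ (1 / Real.sqrt 2) * (p : ℝ) ^ (-(p : ℝ) / 4 - 1 / 2) *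
        (n : ℝ) ^ (-(p : ℝ) / 4) * (D n : ℝ) ^ ((2 - (p : ℝ)) / 4)) :
    ∃ C : ℝ, ∀ᶠ n in atTop, S n ≤ C := by
  refine ⟨4, ?_⟩
  filter_upwards [hbound, eventually_gt_atTop 0] with n hb hn
  rw [hS n]
  calc _ ≤ ∑ d ∈ Finset.range (D n + 1), 2 * (1 / 2 : ℝ) ^ d :=
        Finset.sum_le_sum fun d hd =>
          pow_div_factorial_mul_integral_inner_pow_le hp
            (Nat.lt_succ_iff.mp (Finset.mem_range.mp hd)) hn (hlam n).le hb
    _ ≤ 4 := by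
        rw [← Finset.mul_sum]
        linarith [sum_geometric_two_le (D n + 1)]
end

section
/- In the spiked Wigner model with Rademacher prior (p = 2, λ = λ̂/√(2n)): if λ̂ > 1 is constant and D = D(n) → ∞, then ‖L_n^{≤D}‖² → ∞ as n → ∞. Concretely, for any d with ω(1) ≤ d ≤ min(D, o(n)), ‖L_n^{≤D}‖² ≥ (1/(2√d)) · (λ̂² (1 − d/n))^d. -/
open MeasureTheory Filter

/-- Sign associated to a Boolean. -/
def sg (b : Bool) : ℝ := if b then 1 else -1

instance : IsProbabilityMeasure rad := by
  constructor
  simp [rad]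
  rw [← two_mul, ENNReal.mul_inv_cancel] <;> norm_num

lemma rad_apply (s : Set ℝ) (hs : MeasurableSet s) :
    rad s = 2⁻¹ * (s.indicator 1 1 + s.indicator 1 (-1)) := by
  simp [rad, Measure.dirac_apply' _ hs]; ring

lemma pi_rad_eq (n : ℕ) :
    (Measure.pi fun _ : Fin n => rad) =
      ((2:ENNReal)^n)⁻¹ • ∑ b : Fin n → Bool, Measure.dirac (fun i => sg (b i)) := by
  classical
  refine Measure.pi_eq fun s hs => ?_
  rw [Measure.smul_apply, Measure.finset_sum_apply]
  simp_rw [Measure.dirac_apply' _ (MeasurableSet.univ_pi hs), Set.indicator_apply,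
    Set.mem_univ_pi, Pi.one_apply]
  have h1 : ∀ b : Fin n → Bool,
      (if (∀ i, sg (b i) ∈ s i) then (1:ENNReal) else 0)
        = ∏ i, if sg (b i) ∈ s i then 1 else 0 := by
    intro b; rw [Finset.prod_boole]; simp
  simp_rw [h1]
  have h2 : ∑ b : Fin n → Bool, ∏ i, (if sg (b i) ∈ s i then (1:ENNReal) else 0)
      = ∏ i : Fin n, ∑ v : Bool, (if sg v ∈ s i then (1:ENNReal) else 0) := by
    rw [Finset.prod_univ_sum, Fintype.piFinset_univ]
  rw [h2]
  simp_rw [rad_apply _ (hs _)]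
  rw [Finset.prod_mul_distrib, Finset.prod_const, Finset.card_univ, Fintype.card_fin,
    ← ENNReal.inv_pow, smul_eq_mul]
  congr 1
  refine Finset.prod_congr rfl fun i _ => ?_
  rw [Fintype.sum_bool]
  simp [sg, Set.indicator_apply]

lemma prod_pi_rad_eq (n : ℕ) :
    ((Measure.pi fun _ : Fin n => rad).prod (Measure.pi fun _ : Fin n => rad)) =
      ((4:ENNReal)^n)⁻¹ • ∑ p : (Fin n → Bool) × (Fin n → Bool),
        Measure.dirac ((fun i => sg (p.1 i)), (fun i => sg (p.2 i))) := by
  classical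
  refine Measure.prod_eq fun s t hs ht => ?_
  rw [Measure.smul_apply, Measure.finset_sum_apply]
  simp_rw [Measure.dirac_apply' _ (hs.prod ht), Set.indicator_apply, Set.mem_prod, Pi.one_apply]
  have h1 : ∀ p : (Fin n → Bool) × (Fin n → Bool),
      (if ((fun i => sg (p.1 i)) ∈ s ∧ (fun i => sg (p.2 i)) ∈ t) then (1:ENNReal) else 0)
        = (if (fun i => sg (p.1 i)) ∈ s then (1:ENNReal) else 0) *
          (if (fun i => sg (p.2 i)) ∈ t then (1:ENNReal) else 0) := by
    intro p
    by_cases h : (fun i => sg (p.1 i)) ∈ s <;> by_cases h' : (fun i => sg (p.2 i)) ∈ t <;>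
      simp [h, h']
  simp_rw [h1]
  rw [Fintype.sum_prod_type]
  dsimp only
  rw [show (∑ x : Fin n → Bool, ∑ y : Fin n → Bool, ((if (fun i => sg (x i)) ∈ s then (1:ENNReal) else 0) * if (fun i => sg (y i)) ∈ t then (1:ENNReal) else 0)) = (∑ x : Fin n → Bool, if (fun i => sg (x i)) ∈ s then (1:ENNReal) else 0) * ∑ y : Fin n → Bool, if (fun i => sg (y i)) ∈ t then (1:ENNReal) else 0 from (Finset.sum_mul_sum _ _ _ _).symm]
  rw [pi_rad_eq n, Measure.smul_apply, Measure.smul_apply, Measure.finset_sum_apply,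
    Measure.finset_sum_apply]
  simp_rw [Measure.dirac_apply' _ hs, Measure.dirac_apply' _ ht, Set.indicator_apply, Pi.one_apply]
  have h4 : ((4:ENNReal)^n)⁻¹ = ((2:ENNReal)^n)⁻¹ * ((2:ENNReal)^n)⁻¹ := by
    rw [← ENNReal.mul_inv (by simp) (by simp), ← mul_pow]
    norm_num
  rw [h4, smul_eq_mul, smul_eq_mul, smul_eq_mul]
  ring

lemma integrable_dirac'' {α : Type*} [MeasurableSpace α] {f : α → ℝ}
    (hf : StronglyMeasurable f) (a : α) : Integrable f (Measure.dirac a) := by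
  refine ⟨hf.aestronglyMeasurable, ?_⟩
  rw [hasFiniteIntegral_def, lintegral_dirac' _ hf.measurable.enorm]
  exact enorm_lt_top

lemma integral_prod_pi_rad (n m : ℕ) :
    (∫ q, (∑ i, q.1 i * q.2 i)^m
        ∂((Measure.pi fun _ : Fin n => rad).prod (Measure.pi fun _ : Fin n => rad))) =
      ((4:ℝ)^n)⁻¹ * ∑ p : (Fin n → Bool) × (Fin n → Bool),
        (∑ i, sg (p.1 i) * sg (p.2 i))^m := by
  have hfm : StronglyMeasurable fun q : (Fin n → ℝ) × (Fin n → ℝ) => (∑ i, q.1 i * q.2 i)^m := by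
    apply Measurable.stronglyMeasurable
    exact (Finset.measurable_sum _ fun i _ =>
      ((measurable_pi_apply i).comp measurable_fst).mul
        ((measurable_pi_apply i).comp measurable_snd)).pow_const m
  rw [prod_pi_rad_eq, integral_smul_measure,
    integral_finset_sum_measure (fun p _ => integrable_dirac'' hfm _)]
  simp_rw [integral_dirac' _ _ hfm]
  rw [smul_eq_mul]
  congr 1
  simp [ENNReal.toReal_inv]

lemma Fn_succ (n d : ℕ) :
    (∑ p : (Fin (n+1) → Bool) × (Fin (n+1) → Bool), (∑ i, sg (p.1 i) * sg (p.2 i))^(2*d))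
    = ∑ p : (Fin n → Bool) × (Fin n → Bool),
        (2*((∑ i, sg (p.1 i) * sg (p.2 i)) + 1)^(2*d)
          + 2*((∑ i, sg (p.1 i) * sg (p.2 i)) - 1)^(2*d)) := by
  classical
  have e1 : ∀ (h : (Fin (n+1) → Bool) → ℝ),
      (∑ q, h q) = ∑ a : Bool, ∑ b : Fin n → Bool, h (Fin.cons a b) := by
    intro h
    rw [← (Fintype.sum_equiv (Fin.consEquiv fun _ => Bool)
      (fun x => h (Fin.cons x.1 x.2)) h (fun x => rfl)), Fintype.sum_prod_type]
  rw [Fintype.sum_prod_type]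
  simp_rw [e1]
  simp only [Fin.sum_univ_succ, Fin.cons_zero, Fin.cons_succ, Fintype.sum_bool, sg,
    if_true, if_false]
  rw [Fintype.sum_prod_type, ← Finset.sum_add_distrib]
  refine Finset.sum_congr rfl fun b _ => ?_
  rw [← Finset.sum_add_distrib, ← Finset.sum_add_distrib, ← Finset.sum_add_distrib]
  refine Finset.sum_congr rfl fun b' _ => ?_
  norm_num
  ring

lemma pointwise_ineq (s : ℝ) (m : ℕ) :
    2*s^(2*(m+1)) + ((2*(m:ℝ)+2)*(2*m+1))*s^(2*m)
      ≤ (s+1)^(2*(m+1)) + (s-1)^(2*(m+1)) := by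
  classical
  set N := 2*(m+1) with hN
  have h1 : (s+1)^N = ∑ k ∈ Finset.range (N+1), s^k * 1^(N-k) * (N.choose k : ℝ) :=
    add_pow s 1 N
  have h2 : (s-1)^N = ∑ k ∈ Finset.range (N+1), s^k * (-1)^(N-k) * (N.choose k : ℝ) := by
    rw [sub_eq_add_neg]; exact add_pow s (-1) N
  rw [h1, h2, ← Finset.sum_add_distrib]
  set g : ℕ → ℝ := fun k => s^k * 1^(N-k) * (N.choose k : ℝ) + s^k * (-1)^(N-k) * (N.choose k : ℝ)
    with hg
  have hnonneg : ∀ k ∈ Finset.range (N+1), 0 ≤ g k := by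
    intro k hk
    rw [Finset.mem_range] at hk
    rcases Nat.even_or_odd k with he | ho
    · have hNk : Even (N - k) := by
        rcases he with ⟨a, ha⟩
        have : Even N := ⟨m+1, by omega⟩
        rcases this with ⟨b, hb⟩
        exact ⟨b - a, by omega⟩
      rw [hg]
      simp only [one_pow, hNk.neg_one_pow]
      have : (0:ℝ) ≤ s^k := he.pow_nonneg s
      positivity
    · have hNk : Odd (N - k) := by
        rcases ho with ⟨a, ha⟩
        refine ⟨m - a, by omega⟩
      rw [hg]
      simp only [one_pow, hNk.neg_one_pow]
      ring_nf
      try norm_num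
  have hsub : ({2*m, 2*m+2} : Finset ℕ) ⊆ Finset.range (N+1) := by
    intro k hk
    simp only [Finset.mem_insert, Finset.mem_singleton] at hk
    rw [Finset.mem_range]
    omega
  have hle := Finset.sum_le_sum_of_subset_of_nonneg hsub
    (fun k hk _ => hnonneg k hk)
  refine le_trans (le_of_eq ?_) hle
  rw [Finset.sum_pair (by omega : 2*m ≠ 2*m+2)]
  have hc : (N.choose (2*m) : ℝ) = (m+1)*(2*m+1) := by
    have : N.choose (2*m) = (m+1)*(2*m+1) := by
      rw [show 2*m = N-2 by omega, Nat.choose_symm (by omega), Nat.choose_two_right,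
        show N*(N-1) = 2*((m+1)*(2*m+1)) from by
          rw [hN, show 2*(m+1)-1 = 2*m+1 from by omega]; ring]
      exact Nat.mul_div_cancel_left _ (by norm_num)
    rw [this]; push_cast; ring
  have hck : N.choose N = 1 := Nat.choose_self N
  rw [hg]
  simp only [hc]
  rw [show N - (2*m) = 2 by omega, show 2*m+2 = N by omega, Nat.sub_self, hck]
  push_cast
  ring

lemma Fn_bound : ∀ n d : ℕ,
    (4:ℝ)^n * (n.choose d) * ((2*d).factorial : ℝ) / 2^d
      ≤ ∑ p : (Fin n → Bool) × (Fin n → Bool), (∑ i, sg (p.1 i) * sg (p.2 i))^(2*d) := by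
  intro n
  induction n with
  | zero =>
    intro d
    cases d with
    | zero => simp
    | succ m =>
      simp [Finset.sum_const, Nat.choose_eq_zero_of_lt (by omega : 0 < m+1)]
  | succ n ih =>
    intro d
    cases d with
    | zero =>
      simp only [Nat.choose_zero_right, mul_zero, pow_zero, Nat.factorial_zero,
        Finset.sum_const, Finset.card_univ, Fintype.card_prod, nsmul_eq_mul, mul_one]
      rw [Nat.cast_one, mul_one, mul_one, div_one]
      simp only [Fintype.card_fun, Fintype.card_bool, Fintype.card_fin]
      push_cast
      rw [← mul_pow]
      norm_num
    | succ m =>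
      rw [Fn_succ]
      have hA := ih (m+1)
      have hB := ih m
      set c : ℝ := 2*((2*(m:ℝ)+2)*(2*m+1)) with hc
      have hc0 : 0 ≤ c := by positivity
      have hsum : ∑ p : (Fin n → Bool) × (Fin n → Bool),
          (4*(∑ i, sg (p.1 i) * sg (p.2 i))^(2*(m+1)) + c*(∑ i, sg (p.1 i) * sg (p.2 i))^(2*m))
          ≤ ∑ p : (Fin n → Bool) × (Fin n → Bool),
            (2*((∑ i, sg (p.1 i) * sg (p.2 i)) + 1)^(2*(m+1))
              + 2*((∑ i, sg (p.1 i) * sg (p.2 i)) - 1)^(2*(m+1))) := by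
        refine Finset.sum_le_sum fun p _ => ?_
        have := pointwise_ineq (∑ i, sg (p.1 i) * sg (p.2 i)) m
        rw [hc]; linarith
      refine le_trans ?_ hsum
      have hsplit : ∑ p : (Fin n → Bool) × (Fin n → Bool),
          (4*(∑ i, sg (p.1 i) * sg (p.2 i))^(2*(m+1)) + c*(∑ i, sg (p.1 i) * sg (p.2 i))^(2*m))
          = 4*(∑ p : (Fin n → Bool) × (Fin n → Bool), (∑ i, sg (p.1 i) * sg (p.2 i))^(2*(m+1)))
            + c*(∑ p : (Fin n → Bool) × (Fin n → Bool), (∑ i, sg (p.1 i) * sg (p.2 i))^(2*m)) := by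
        rw [Finset.sum_add_distrib, Finset.mul_sum, Finset.mul_sum]
      rw [hsplit]
      have hpascal : (((n+1).choose (m+1) : ℕ) : ℝ)
          = (n.choose m : ℝ) + (n.choose (m+1) : ℝ) := by
        rw [Nat.choose_succ_succ]; push_cast; ring
      have hfact : (((2*(m+1)).factorial : ℕ) : ℝ)
          = (2*(m:ℝ)+2)*(2*m+1)*((2*m).factorial : ℝ) := by
        rw [show 2*(m+1) = (2*m+1)+1 from by ring, Nat.factorial_succ, Nat.factorial_succ]
        push_cast; ring
      have heq : (4:ℝ)^(n+1) * ((n+1).choose (m+1)) * ((2*(m+1)).factorial : ℝ) / 2^(m+1)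
          = 4*((4:ℝ)^n * (n.choose (m+1)) * ((2*(m+1)).factorial : ℝ) / 2^(m+1))
            + c*((4:ℝ)^n * (n.choose m) * ((2*m).factorial : ℝ) / 2^m) := by
        rw [hpascal, hfact, hc]
        field_simp
        ring
      rw [heq]
      have h1 : 4*((4:ℝ)^n * (n.choose (m+1)) * ((2*(m+1)).factorial : ℝ) / 2^(m+1))
          ≤ 4*(∑ p : (Fin n → Bool) × (Fin n → Bool),
              (∑ i, sg (p.1 i) * sg (p.2 i))^(2*(m+1))) :=
        mul_le_mul_of_nonneg_left hA (by norm_num)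
      have h2 : c*((4:ℝ)^n * (n.choose m) * ((2*m).factorial : ℝ) / 2^m)
          ≤ c*(∑ p : (Fin n → Bool) × (Fin n → Bool), (∑ i, sg (p.1 i) * sg (p.2 i))^(2*m)) :=
        mul_le_mul_of_nonneg_left hB hc0
      linarith

lemma cb_nat : ∀ d : ℕ, 1 ≤ d → 4^(2*d) ≤ 4*d*(Nat.centralBinom d)^2 := by
  intro d
  induction d with
  | zero => omega
  | succ k ih =>
    intro _
    rcases Nat.eq_zero_or_pos k with rfl | hk
    · decide
    · have IH := ih hk
      have hmul := Nat.succ_mul_centralBinom_succ k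
      have hpos : 0 < (k+1)^2 := by positivity
      refine Nat.le_of_mul_le_mul_left ?_ hpos
      have hsq : ((k+1)*Nat.centralBinom (k+1))^2 = (2*(2*k+1)*Nat.centralBinom k)^2 := by
        rw [hmul]
      calc (k+1)^2 * 4^(2*(k+1)) = 16*(k+1)^2*4^(2*k) := by ring
        _ ≤ 16*(k+1)^2*(4*k*(Nat.centralBinom k)^2) := Nat.mul_le_mul_left _ IH
        _ ≤ 4*(k+1)*(2*(2*k+1)*Nat.centralBinom k)^2 := by
            nlinarith [sq_nonneg (Nat.centralBinom k)]
        _ = 4*(k+1)*((k+1)*Nat.centralBinom (k+1))^2 := by rw [hsq]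
        _ = (k+1)^2*(4*(k+1)*Nat.centralBinom (k+1)^2) := by ring

lemma cb_real (d : ℕ) (hd : 1 ≤ d) :
    (4:ℝ)^d ≤ 2*Real.sqrt d * (Nat.centralBinom d : ℝ) := by
  have h1 : ((4:ℝ)^d)^2 ≤ (2*Real.sqrt d * (Nat.centralBinom d : ℝ))^2 := by
    have hn := cb_nat d hd
    have h : ((4:ℕ)^(2*d) : ℝ) ≤ ((4*d*(Nat.centralBinom d)^2 : ℕ) : ℝ) := by exact_mod_cast hn
    push_cast at h
    calc ((4:ℝ)^d)^2 = (4:ℝ)^(2*d) := by rw [← pow_mul]; ring_nf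
      _ ≤ 4*d*((Nat.centralBinom d : ℝ))^2 := h
      _ = (2*Real.sqrt d * (Nat.centralBinom d : ℝ))^2 := by
          rw [mul_pow, mul_pow, Real.sq_sqrt (by positivity : (0:ℝ) ≤ (d:ℝ))]
          ring
  exact le_of_pow_le_pow_left₀ (by norm_num) (by positivity) h1

lemma part2 (lamhat : ℝ) (hlam : 1 < lamhat) (D : ℕ → ℕ) (S : ℕ → ℝ)
    (hS : ∀ n, S n = ∑ d ∈ Finset.range (D n + 1),
      (1 / (Nat.factorial d : ℝ)) * (lamhat ^ 2 / (2 * n)) ^ d *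
        ∫ q, (∑ i, q.1 i * q.2 i) ^ (2 * d)
          ∂((Measure.pi fun _ : Fin n => rad).prod (Measure.pi fun _ : Fin n => rad))) :
    ∀ n d : ℕ, 1 ≤ d → d ≤ D n → d ≤ n →
      (1 / (2 * Real.sqrt d)) * (lamhat ^ 2 * (1 - (d : ℝ) / n)) ^ d ≤ S n := by
  intro n d hd1 hdD hdn
  have hn1 : 1 ≤ n := hd1.trans hdn
  have hn0 : (0:ℝ) < n := by exact_mod_cast Nat.pos_of_ne_zero (by omega)
  have hnne : (n:ℝ) ≠ 0 := ne_of_gt hn0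
  have hd0 : (0:ℝ) < d := by exact_mod_cast hd1
  rw [hS n]
  simp only [integral_prod_pi_rad]
  set T : ℕ → ℝ := fun k => (1 / (Nat.factorial k : ℝ)) * (lamhat ^ 2 / (2 * n)) ^ k *
      (((4:ℝ)^n)⁻¹ * ∑ p : (Fin n → Bool) × (Fin n → Bool),
        (∑ i, sg (p.1 i) * sg (p.2 i))^(2*k)) with hT
  have hnonneg : ∀ k ∈ Finset.range (D n + 1), 0 ≤ T k := by
    intro k _
    rw [hT]
    have hsum : 0 ≤ ∑ p : (Fin n → Bool) × (Fin n → Bool),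
        (∑ i, sg (p.1 i) * sg (p.2 i))^(2*k) :=
      Finset.sum_nonneg fun p _ => Even.pow_nonneg ⟨k, by ring⟩ _
    have h1 : (0:ℝ) ≤ lamhat ^ 2 / (2 * n) := by positivity
    positivity
  have hmem : d ∈ Finset.range (D n + 1) := by rw [Finset.mem_range]; omega
  have hstep1 := Finset.single_le_sum hnonneg hmem
  refine le_trans ?_ hstep1
  -- now bound T d from below
  have hF := Fn_bound n d
  have hcoeff : (0:ℝ) ≤ (1 / (Nat.factorial d : ℝ)) * (lamhat ^ 2 / (2 * n)) ^ d := by positivity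
  have hTd : (1 / (Nat.factorial d : ℝ)) * (lamhat ^ 2 / (2 * n)) ^ d *
      ((n.choose d : ℝ) * ((2*d).factorial : ℝ) / 2^d) ≤ T d := by
    rw [hT]
    have h4 : ((4:ℝ)^n)⁻¹ * ((4:ℝ)^n * (n.choose d) * ((2*d).factorial : ℝ) / 2^d)
        = (n.choose d : ℝ) * ((2*d).factorial : ℝ) / 2^d := by
      field_simp
    calc (1 / (Nat.factorial d : ℝ)) * (lamhat ^ 2 / (2 * n)) ^ d *
          ((n.choose d : ℝ) * ((2*d).factorial : ℝ) / 2^d)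
        = (1 / (Nat.factorial d : ℝ)) * (lamhat ^ 2 / (2 * n)) ^ d *
          (((4:ℝ)^n)⁻¹ * ((4:ℝ)^n * (n.choose d) * ((2*d).factorial : ℝ) / 2^d)) := by
          rw [h4]
      _ ≤ _ := by
          refine mul_le_mul_of_nonneg_left ?_ hcoeff
          exact mul_le_mul_of_nonneg_left hF (by positivity)
  refine le_trans ?_ hTd
  -- pure algebra now
  have hfd0 : (0:ℝ) < (Nat.factorial d : ℝ) := by exact_mod_cast (Nat.factorial_pos d)
  have hfdne : ((Nat.factorial d : ℕ) : ℝ) ≠ 0 := ne_of_gt hfd0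
  have hch_desc : ((n:ℝ)-d)^d ≤ (n.choose d : ℝ) * (Nat.factorial d : ℝ) := by
    have h1 : (n-d)^d ≤ n.descFactorial d :=
      le_trans (Nat.pow_le_pow_left (by omega) d) (Nat.pow_sub_le_descFactorial n d)
    have h2 : n.descFactorial d = (Nat.factorial d) * n.choose d :=
      Nat.descFactorial_eq_factorial_mul_choose n d
    have h3 : (((n-d:ℕ)) : ℝ) = (n:ℝ) - d := by
      push_cast [Nat.cast_sub hdn]; ring
    calc ((n:ℝ)-d)^d = (((n-d:ℕ)):ℝ)^d := by rw [h3]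
      _ ≤ ((n.descFactorial d : ℕ) : ℝ) := by exact_mod_cast h1
      _ = (n.choose d : ℝ) * (Nat.factorial d : ℝ) := by rw [h2]; push_cast; ring
  have hf2d : (((2*d).factorial : ℕ) : ℝ)
      = (Nat.centralBinom d : ℝ) * ((Nat.factorial d : ℕ) : ℝ)^2 := by
    have h := Nat.choose_mul_factorial_mul_factorial (show d ≤ 2*d by omega)
    rw [show 2*d - d = d from by omega] at h
    have : Nat.centralBinom d * Nat.factorial d * Nat.factorial d = (2*d).factorial := h
    calc (((2*d).factorial : ℕ) : ℝ)
        = ((Nat.centralBinom d * Nat.factorial d * Nat.factorial d : ℕ) : ℝ) := by rw [this]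
      _ = _ := by push_cast; ring
  have hBnn : (0:ℝ) ≤ lamhat ^ 2 * (1 - (d : ℝ) / n) := by
    have : (d:ℝ)/n ≤ 1 := by
      rw [div_le_one hn0]; exact_mod_cast hdn
    have h1 : (0:ℝ) ≤ 1 - (d:ℝ)/n := by linarith
    positivity
  have hsq0 : (0:ℝ) < Real.sqrt d := Real.sqrt_pos.mpr hd0
  have hcb := cb_real d hd1
  have stepA : (1 / (2 * Real.sqrt d)) * (lamhat ^ 2 * (1 - (d : ℝ) / n)) ^ d
      ≤ ((Nat.centralBinom d : ℝ)/4^d) * (lamhat ^ 2 * (1 - (d : ℝ) / n)) ^ d := by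
    refine mul_le_mul_of_nonneg_right ?_ (pow_nonneg hBnn d)
    rw [div_le_div_iff₀ (by positivity) (by positivity : (0:ℝ) < 4^d)]
    calc (1:ℝ) * 4^d = 4^d := one_mul _
      _ ≤ 2*Real.sqrt d * (Nat.centralBinom d : ℝ) := hcb
      _ = (Nat.centralBinom d : ℝ) * (2*Real.sqrt d) := by ring
  refine le_trans stepA ?_
  have stepB : ((Nat.centralBinom d : ℝ)/4^d) * (lamhat ^ 2 * (1 - (d : ℝ) / n)) ^ d
      = (Nat.centralBinom d : ℝ) * ((lamhat^2/(4*n))^d * ((n:ℝ)-d)^d) := by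
    have hb : lamhat ^ 2 * (1 - (d : ℝ) / n) = (lamhat^2/(4*n))*((n:ℝ)-d) * 4 := by
      field_simp
    rw [hb]
    simp only [mul_pow]
    have h4d : (4:ℝ)^d ≠ 0 := by positivity
    field_simp
  rw [stepB]
  have stepC : (Nat.centralBinom d : ℝ) * ((lamhat^2/(4*n))^d * ((n:ℝ)-d)^d)
      ≤ (Nat.centralBinom d : ℝ) * ((lamhat^2/(4*n))^d * ((n.choose d : ℝ) * (Nat.factorial d : ℝ))) := by
    refine mul_le_mul_of_nonneg_left ?_ (by positivity)
    exact mul_le_mul_of_nonneg_left hch_desc (by positivity)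
  refine le_trans stepC (le_of_eq ?_)
  rw [hf2d]
  have h24 : lamhat^2/(4*(n:ℝ)) = (lamhat^2/(2*n))/2 := by
    field_simp
    ring
  rw [h24, div_pow]
  field_simp

lemma part1 (lamhat : ℝ) (hlam : 1 < lamhat) (D : ℕ → ℕ) (hD : Tendsto D atTop atTop)
    (S : ℕ → ℝ)
    (hbound : ∀ n d : ℕ, 1 ≤ d → d ≤ D n → d ≤ n →
      (1 / (2 * Real.sqrt d)) * (lamhat ^ 2 * (1 - (d : ℝ) / n)) ^ d ≤ S n) :
    Tendsto S atTop atTop := by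
  have hl2 : 1 < lamhat^2 := by nlinarith
  obtain ⟨k, hk⟩ := exists_nat_gt (lamhat^2/(lamhat^2 - 1))
  have hkpos : 0 < k := by
    have h0 : (0:ℝ) < lamhat^2/(lamhat^2-1) := by
      apply div_pos (by positivity) (by linarith)
    by_contra h
    have : k = 0 := by omega
    subst this
    simp at hk
    linarith
  have hkR : (0:ℝ) < k := by exact_mod_cast hkpos
  set c : ℝ := lamhat^2 * (1 - 1/(k:ℝ)) with hcdef
  have hk' : lamhat^2 < k*(lamhat^2 - 1) := by
    rw [div_lt_iff₀ (by linarith)] at hk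
    linarith
  have hc1 : 1 < c := by
    have hmul : c * k = lamhat^2*((k:ℝ)-1) := by
      rw [hcdef]; field_simp
    have hlt : 1 * (k:ℝ) < c * k := by
      rw [hmul, one_mul]
      nlinarith
    exact lt_of_mul_lt_mul_right hlt (le_of_lt hkR)
  have hc0 : (0:ℝ) ≤ c := by linarith
  set c' : ℝ := Real.sqrt c with hc'def
  have hc'1 : 1 < c' := by
    rw [hc'def, show (1:ℝ) = Real.sqrt 1 from (Real.sqrt_one).symm]
    exact Real.sqrt_lt_sqrt (by norm_num) hc1
  have hc'sq : c'^2 = c := Real.sq_sqrt hc0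
  set dd : ℕ → ℕ := fun n => min (D n) (n/k) with hdd_def
  have hdd : Tendsto dd atTop atTop := by
    rw [tendsto_atTop]
    intro b
    filter_upwards [hD.eventually (eventually_ge_atTop b), eventually_ge_atTop (k*b)]
      with n h1 h2
    exact le_min h1 ((Nat.le_div_iff_mul_le hkpos).mpr (by rw [Nat.mul_comm]; exact h2))
  have hg : Tendsto (fun m : ℕ => c'^m * ((c'-1)/2)) atTop atTop :=
    (tendsto_pow_atTop_atTop_of_one_lt hc'1).atTop_mul_const (by linarith)
  have hcomp : Tendsto (fun n => c'^(dd n) * ((c'-1)/2)) atTop atTop := hg.comp hdd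
  refine tendsto_atTop_mono' atTop ?_ hcomp
  filter_upwards [eventually_ge_atTop k, hD.eventually (eventually_ge_atTop 1)] with n hnk hD1
  set m : ℕ := dd n with hm
  have hm1 : 1 ≤ m := le_min hD1 ((Nat.le_div_iff_mul_le hkpos).mpr (by omega))
  have hmD : m ≤ D n := min_le_left _ _
  have hmn : m ≤ n := le_trans (min_le_right _ _) (Nat.div_le_self n k)
  have hn0 : (0:ℝ) < n := by
    have : 0 < n := by omega
    exact_mod_cast this
  have hmR1 : (1:ℝ) ≤ m := by exact_mod_cast hm1
  -- (i)
  have hi : c ≤ lamhat^2 * (1 - (m:ℝ)/n) := by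
    have h1 : (m:ℝ) ≤ (n:ℝ)/k := by
      calc (m:ℝ) ≤ ((n/k : ℕ) : ℝ) := by exact_mod_cast min_le_right (D n) (n/k)
        _ ≤ (n:ℝ)/(k:ℝ) := Nat.cast_div_le
    have h2 : (m:ℝ)/n ≤ 1/(k:ℝ) := by
      rw [div_le_div_iff₀ hn0 hkR]
      calc (m:ℝ) * k ≤ ((n:ℝ)/k) * k := by
            exact mul_le_mul_of_nonneg_right h1 (le_of_lt hkR)
        _ = (n:ℝ) := by field_simp
        _ = 1 * n := (one_mul _).symm
    rw [hcdef]
    have : 1 - 1/(k:ℝ) ≤ 1 - (m:ℝ)/n := by linarith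
    nlinarith
  have hBnn : (0:ℝ) ≤ lamhat^2 * (1 - (m:ℝ)/n) := le_trans hc0 hi
  -- (ii)
  have hii : c^m ≤ (lamhat^2 * (1 - (m:ℝ)/n))^m := pow_le_pow_left₀ hc0 hi m
  -- sqrt m facts
  have hsm0 : (0:ℝ) < Real.sqrt m := Real.sqrt_pos.mpr (by linarith)
  have hsm : Real.sqrt m ≤ (m:ℝ) := by
    calc Real.sqrt m ≤ Real.sqrt ((m:ℝ)^2) := Real.sqrt_le_sqrt (by nlinarith)
      _ = (m:ℝ) := Real.sqrt_sq (by linarith)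
  -- Bernoulli
  have hbern : (m:ℝ)*(c'-1) ≤ c'^m := by
    have h := one_add_mul_le_pow (show (-2:ℝ) ≤ c'-1 by linarith) m
    have h2 : (1:ℝ) + (c'-1) = c' := by ring
    rw [h2] at h
    have hm0 : (0:ℝ) ≤ (m:ℝ) := by positivity
    linarith
  have h1 : Real.sqrt m * (c'-1) ≤ c'^m :=
    le_trans (mul_le_mul_of_nonneg_right hsm (by linarith)) hbern
  have h2 : (c'-1)/2 ≤ c'^m/(2*Real.sqrt m) := by
    rw [div_le_div_iff₀ (by norm_num) (by positivity)]
    nlinarith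
  have h3 : c'^m*((c'-1)/2) ≤ c'^m*(c'^m/(2*Real.sqrt m)) :=
    mul_le_mul_of_nonneg_left h2 (by positivity)
  have h4 : c'^m*(c'^m/(2*Real.sqrt m)) = (1/(2*Real.sqrt m))*c^m := by
    have hcm : c^m = c'^m * c'^m := by
      rw [← hc'sq, ← pow_mul, two_mul, pow_add]
    rw [hcm]
    field_simp
  have h5 : (1/(2*Real.sqrt m))*c^m ≤ (1/(2*Real.sqrt m))*(lamhat^2 * (1 - (m:ℝ)/n))^m :=
    mul_le_mul_of_nonneg_left hii (by positivity)
  calc c'^(dd n) * ((c'-1)/2) ≤ c'^m*(c'^m/(2*Real.sqrt m)) := h3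
    _ = (1/(2*Real.sqrt m))*c^m := h4
    _ ≤ (1/(2*Real.sqrt m))*(lamhat^2 * (1 - (m:ℝ)/n))^m := h5
    _ ≤ S n := hbound n m hm1 hmD hmn

/-- Spiked Wigner model above the PCA threshold: with
`‖L_n^{≤D}‖² = Σ_{d=0}^D (1/d!)(λ̂²/(2n))^d E[⟨x¹,x²⟩^{2d}]` over Rademacher vectors,
if `λ̂ > 1` and `D → ∞`, then `‖L_n^{≤D}‖² → ∞`; concretely,
`‖L_n^{≤D}‖² ≥ (1/(2√d))(λ̂²(1 − d/n))^d` for any `1 ≤ d ≤ min(D n, n)`. -/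
theorem stmt17 (lamhat : ℝ) (hlam : 1 < lamhat) (D : ℕ → ℕ)
    (hD : Tendsto D atTop atTop)
    (S : ℕ → ℝ)
    (hS : ∀ n, S n = ∑ d ∈ Finset.range (D n + 1),
      (1 / (Nat.factorial d : ℝ)) * (lamhat ^ 2 / (2 * n)) ^ d *
        ∫ q, (∑ i, q.1 i * q.2 i) ^ (2 * d)
          ∂((Measure.pi fun _ : Fin n => rad).prod (Measure.pi fun _ : Fin n => rad))) :
    Tendsto S atTop atTop ∧
    ∀ n d : ℕ, 1 ≤ d → d ≤ D n → d ≤ n →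
      (1 / (2 * Real.sqrt d)) * (lamhat ^ 2 * (1 - (d : ℝ) / n)) ^ d ≤ S n := by
  have hb := part2 lamhat hlam D S hS
  exact ⟨part1 lamhat hlam D hD S hb, hb⟩
end

section
/- Suppose π is σ²-subgaussian with E[π] = 0 and E[π²] = 1, where σ² is a constant. Let the spike prior draw x ∈ ℝ^n with i.i.d. entries distributed as π. Then for any η > 0 there exist δ > 0 and C > 0 such that for all n and all t ∈ [0, δn], Pr{|⟨x¹, x²⟩| ≥ t} ≤ C exp(−(1−η)t²/(2n)), where x¹, x² are independent draws of the prior. -/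
open MeasureTheory

namespace Stmt18Aux

open Real Set ENNReal ProbabilityTheory


lemma exp_sub_one_le_mul (v : ℝ) (hv : 0 ≤ v) : Real.exp v - 1 ≤ v * Real.exp v := by
  have h := Real.add_one_le_exp (-v)
  have h1 : (-v + 1) * Real.exp v ≤ Real.exp (-v) * Real.exp v :=
    mul_le_mul_of_nonneg_right h (Real.exp_pos v).le
  rw [← Real.exp_add] at h1
  simp at h1
  nlinarith

lemma quad_le_exp {w : ℝ} (hw : 0 ≤ w) : 1 + w + w ^ 2 / 2 ≤ Real.exp w := by
  have := Real.sum_le_exp_of_nonneg hw 3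
  simp [Finset.sum_range_succ] at this
  nlinarith

lemma cube_le_exp {w : ℝ} (hw : 0 ≤ w) : w ^ 3 ≤ 6 * Real.exp w := by
  have := Real.sum_le_exp_of_nonneg hw 4
  simp [Finset.sum_range_succ, Nat.factorial] at this
  nlinarith [sq_nonneg w, mul_nonneg (mul_nonneg hw hw) hw]

lemma sq_le_exp {w : ℝ} (hw : 0 ≤ w) : w ^ 2 ≤ 2 * Real.exp w := by
  nlinarith [quad_le_exp hw]

lemma exp_taylor_nonneg {u : ℝ} (hu : 0 ≤ u) :
    Real.exp u - 1 - u ≤ u ^ 2 / 2 * Real.exp u := by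
  have key : ∫ s in (0:ℝ)..u, (Real.exp s - 1) ≤ ∫ s in (0:ℝ)..u, Real.exp u * s := by
    apply intervalIntegral.integral_mono_on hu
    · exact (Real.continuous_exp.sub continuous_const).intervalIntegrable _ _
    · exact (continuous_const.mul continuous_id).intervalIntegrable _ _
    · intro s hs
      have h1 := exp_sub_one_le_mul s hs.1
      have h2 : Real.exp s ≤ Real.exp u := Real.exp_le_exp.2 hs.2
      nlinarith [hs.1]
  rw [intervalIntegral.integral_sub (Real.continuous_exp.intervalIntegrable _ _)
    intervalIntegrable_const, intervalIntegral.integral_const_mul] at key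
  simp [integral_exp, integral_id] at key
  nlinarith

lemma exp_taylor (u : ℝ) : Real.exp u ≤ 1 + u + u ^ 2 / 2 * Real.exp |u| := by
  rcases le_or_gt 0 u with h | h
  · rw [abs_of_nonneg h]; linarith [exp_taylor_nonneg h]
  · rw [abs_of_neg h]
    have hw : 0 ≤ -u := by linarith
    have hq : 1 + (-u) + (-u) ^ 2 / 2 ≤ Real.exp (-u) := quad_le_exp hw
    have hX1 : 1 ≤ Real.exp (-u) := Real.one_le_exp hw
    have hmul : Real.exp u * Real.exp (-u) = 1 := by rw [← Real.exp_add]; simp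
    have hXpos : 0 < Real.exp (-u) := Real.exp_pos _
    set X := Real.exp (-u) with hXdef
    have hq' : 1 - u + u ^ 2 / 2 ≤ X := by nlinarith
    -- goal: exp u ≤ 1 + u + u^2/2 * X, with exp u = 1/X
    rw [show Real.exp u = X⁻¹ by field_simp [hXdef]; nlinarith [hmul]]
    rw [inv_le_iff_one_le_mul₀ hXpos]
    nlinarith [sq_nonneg u, sq_nonneg (u * X), sq_nonneg (X - 1), sq_nonneg (u*u),
      mul_nonneg (sq_nonneg u) (sub_nonneg.2 hq'), mul_nonneg (sq_nonneg u) (sub_nonneg.2 hX1),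
      mul_nonneg (mul_nonneg hw hw) hw, mul_nonneg (mul_nonneg (mul_nonneg hw hw) hw) hw]



theorem lintegral_pi_prod {n : ℕ} {E : Fin n → Type*} [∀ i, MeasurableSpace (E i)]
    (μ : ∀ i, Measure (E i)) [∀ i, SigmaFinite (μ i)]
    (f : ∀ i, E i → ℝ≥0∞) (hf : ∀ i, Measurable (f i)) :
    ∫⁻ x : ∀ i, E i, ∏ i, f i (x i) ∂Measure.pi μ = ∏ i, ∫⁻ x, f i x ∂μ i := by
  induction n with
  | zero => simp [lintegral_const, Measure.pi_empty_univ]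
  | succ n ih =>
    have hmp := (measurePreserving_piFinSuccAbove μ 0).symm
    have hmeas : Measurable fun x : ∀ i, E i => ∏ i, f i (x i) :=
      Finset.measurable_prod _ fun i _ => (hf i).comp (measurable_pi_apply i)
    rw [← hmp.lintegral_comp hmeas]
    simp_rw [MeasurableEquiv.piFinSuccAbove_symm_apply, Fin.insertNthEquiv,
      Fin.prod_univ_succ, Fin.insertNth_zero, Equiv.coe_fn_mk, Fin.cons_succ,
      Fin.cons_zero]
    have hg : Measurable fun y : ∀ j : Fin n, E (Fin.succ j) => ∏ x : Fin n, f x.succ (y x) :=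
      Finset.measurable_prod _ fun (i : Fin n) _ => (hf i.succ).comp (measurable_pi_apply i)
    calc (∫⁻ a : E 0 × (∀ j : Fin n, E (Fin.succ j)),
            f 0 a.1 * ∏ x : Fin n, f x.succ (a.2 x)
            ∂(μ 0).prod (Measure.pi fun j : Fin n => μ j.succ))
        = (∫⁻ x, f 0 x ∂μ 0) *
            ∫⁻ y : ∀ j : Fin n, E (Fin.succ j), ∏ x : Fin n, f x.succ (y x)
              ∂Measure.pi fun j : Fin n => μ j.succ :=
          lintegral_prod_mul (hf 0).aemeasurable hg.aemeasurable
      _ = (∫⁻ x, f 0 x ∂μ 0) * ∏ i : Fin n, ∫⁻ x, f i.succ x ∂μ i.succ := by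
          rw [ih (fun i : Fin n => μ i.succ) (fun i : Fin n => f i.succ)
            (fun i : Fin n => hf i.succ)]



variable {Ω : Type*} [MeasurableSpace Ω] (P : Measure Ω) [IsProbabilityMeasure P]
  (f : Ω → ℝ) (hmeas : Measurable f) (σ2 : ℝ) (hσ : 0 < σ2)
  (hmgfInt : ∀ t : ℝ, Integrable (fun x => Real.exp (t * f x)) P)
  (hmgf : ∀ t : ℝ, ∫ x, Real.exp (t * f x) ∂P ≤ Real.exp (σ2 * t ^ 2 / 2))

include hσ hmgfInt hmgf in
lemma tail_bound {s : ℝ} (hs : 0 ≤ s) :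
    P {ω | s ≤ |f ω|} ≤ ENNReal.ofReal (2 * Real.exp (-s ^ 2 / (2 * σ2))) := by
  have hθ : 0 ≤ s / σ2 := div_nonneg hs hσ.le
  have hexp : Real.exp (-(s / σ2) * s) * Real.exp (σ2 * (s / σ2) ^ 2 / 2)
      = Real.exp (-s ^ 2 / (2 * σ2)) := by
    rw [← Real.exp_add]; congr 1; field_simp; ring
  have h1 : (P {ω | s ≤ f ω}).toReal ≤ Real.exp (-s ^ 2 / (2 * σ2)) := by
    calc (P {ω | s ≤ f ω}).toReal
        ≤ Real.exp (-(s / σ2) * s) * mgf f P (s / σ2) :=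
          measure_ge_le_exp_mul_mgf s hθ (hmgfInt _)
      _ ≤ Real.exp (-(s / σ2) * s) * Real.exp (σ2 * (s / σ2) ^ 2 / 2) := by
          have : mgf f P (s / σ2) ≤ Real.exp (σ2 * (s / σ2) ^ 2 / 2) := hmgf _
          exact mul_le_mul_of_nonneg_left this (Real.exp_pos _).le
      _ = _ := hexp
  have h2 : (P {ω | s ≤ -f ω}).toReal ≤ Real.exp (-s ^ 2 / (2 * σ2)) := by
    have hint : Integrable (fun x => Real.exp ((s / σ2) * (-f x))) P := by
      simpa [neg_mul, mul_neg] using hmgfInt (-(s / σ2))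
    calc (P {ω | s ≤ -f ω}).toReal
        ≤ Real.exp (-(s / σ2) * s) * mgf (fun ω => -f ω) P (s / σ2) :=
          measure_ge_le_exp_mul_mgf s hθ hint
      _ ≤ Real.exp (-(s / σ2) * s) * Real.exp (σ2 * (s / σ2) ^ 2 / 2) := by
          have hb : mgf (fun ω => -f ω) P (s / σ2) ≤ Real.exp (σ2 * (s / σ2) ^ 2 / 2) := by
            have := hmgf (-(s / σ2))
            rw [show σ2 * (-(s / σ2)) ^ 2 / 2 = σ2 * (s / σ2) ^ 2 / 2 by ring] at this
            calc mgf (fun ω => -f ω) P (s / σ2)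
                = ∫ x, Real.exp (-(s / σ2) * f x) ∂P := by
                  unfold mgf; congr 1 with x; simp [mul_neg, neg_mul]
              _ ≤ _ := this
          exact mul_le_mul_of_nonneg_left hb (Real.exp_pos _).le
      _ = _ := hexp
  have hsub : {ω | s ≤ |f ω|} ⊆ {ω | s ≤ f ω} ∪ {ω | s ≤ -f ω} := by
    intro ω hω
    simp only [Set.mem_setOf_eq] at hω
    rcases le_abs.1 hω with h | h
    · exact Or.inl h
    · exact Or.inr h
  calc P {ω | s ≤ |f ω|} ≤ P ({ω | s ≤ f ω} ∪ {ω | s ≤ -f ω}) := measure_mono hsub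
    _ ≤ P {ω | s ≤ f ω} + P {ω | s ≤ -f ω} := measure_union_le _ _
    _ ≤ ENNReal.ofReal (Real.exp (-s ^ 2 / (2 * σ2)))
        + ENNReal.ofReal (Real.exp (-s ^ 2 / (2 * σ2))) := by
        gcongr
        · exact (ENNReal.le_ofReal_iff_toReal_le (measure_ne_top P _) (Real.exp_pos _).le).2 h1
        · exact (ENNReal.le_ofReal_iff_toReal_le (measure_ne_top P _) (Real.exp_pos _).le).2 h2
    _ = ENNReal.ofReal (2 * Real.exp (-s ^ 2 / (2 * σ2))) := by
        rw [← ENNReal.ofReal_add (Real.exp_pos _).le (Real.exp_pos _).le]; ring_nf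

include hmeas hσ hmgfInt hmgf in
lemma expsq_lintegral_ne_top :
    ∫⁻ ω, ENNReal.ofReal (Real.exp ((4 * σ2)⁻¹ * f ω ^ 2)) ∂P ≠ ∞ := by
  set c : ℝ := (4 * σ2)⁻¹ with hc
  have hcpos : 0 < c := by positivity
  have hconv : ∫⁻ ω, ENNReal.ofReal (Real.exp (c * f ω ^ 2)) ∂P
      = ∫⁻ t in Ioi (0:ℝ), P {ω | t ≤ Real.exp (c * f ω ^ 2)} :=
    lintegral_eq_lintegral_meas_le P
      (Filter.Eventually.of_forall fun ω => (Real.exp_pos _).le)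
      ((((hmeas.pow_const 2).const_mul c).exp).aemeasurable)
  rw [hconv]
  have hsplit : (Ioi (0:ℝ)) = Ioc (0:ℝ) 1 ∪ Ioi 1 := (Ioc_union_Ioi_eq_Ioi zero_le_one).symm
  rw [hsplit, lintegral_union measurableSet_Ioi (Ioc_disjoint_Ioi le_rfl)]
  have h1 : ∫⁻ t in Ioc (0:ℝ) 1, P {ω | t ≤ Real.exp (c * f ω ^ 2)} ≤ 1 := by
    calc ∫⁻ t in Ioc (0:ℝ) 1, P {ω | t ≤ Real.exp (c * f ω ^ 2)}
        ≤ ∫⁻ _ in Ioc (0:ℝ) 1, 1 := lintegral_mono fun t => prob_le_one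
      _ = 1 := by simp [Real.volume_Ioc]
  have h2 : ∫⁻ t in Ioi (1:ℝ), P {ω | t ≤ Real.exp (c * f ω ^ 2)}
      ≤ ∫⁻ t in Ioi (1:ℝ), ENNReal.ofReal (2 * (t ^ 2)⁻¹) := by
    apply setLIntegral_mono (((measurable_id.pow_const 2).inv.const_mul 2).ennreal_ofReal)
    intro t ht
    have ht1 : (1:ℝ) < t := ht
    have htpos : (0:ℝ) < t := lt_trans one_pos ht1
    have hlog : 0 ≤ Real.log t := Real.log_nonneg ht1.le
    set s : ℝ := Real.sqrt (Real.log t / c) with hsdef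
    have hs : 0 ≤ s := Real.sqrt_nonneg _
    have hsq : s ^ 2 = Real.log t / c := Real.sq_sqrt (div_nonneg hlog hcpos.le)
    have hincl : {ω | t ≤ Real.exp (c * f ω ^ 2)} ⊆ {ω | s ≤ |f ω|} := by
      intro ω hω
      have hle : Real.log t ≤ c * f ω ^ 2 := (Real.log_le_iff_le_exp htpos).2 hω
      have : Real.log t / c ≤ f ω ^ 2 := (div_le_iff₀' hcpos).2 hle
      calc s ≤ Real.sqrt (f ω ^ 2) := Real.sqrt_le_sqrt this
        _ = |f ω| := Real.sqrt_sq_eq_abs _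
    calc P {ω | t ≤ Real.exp (c * f ω ^ 2)} ≤ P {ω | s ≤ |f ω|} := measure_mono hincl
      _ ≤ ENNReal.ofReal (2 * Real.exp (-s ^ 2 / (2 * σ2))) :=
          tail_bound P f σ2 hσ hmgfInt hmgf hs
      _ = ENNReal.ofReal (2 * (t ^ 2)⁻¹) := by
          congr 1
          rw [hsq]
          congr 1
          have h3 : -(Real.log t / c) / (2 * σ2) = Real.log t * (-2 : ℝ) := by
            rw [hc]; field_simp; ring
          rw [h3, Real.exp_mul, Real.exp_log htpos,
            show ((-2 : ℝ)) = -((2:ℕ):ℝ) by norm_num,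
            Real.rpow_neg htpos.le, Real.rpow_natCast]
  have h2' : ∫⁻ t in Ioi (1:ℝ), ENNReal.ofReal (2 * (t ^ 2)⁻¹) ≠ ∞ := by
    have hi0 : IntegrableOn (fun t : ℝ => (t ^ 2)⁻¹) (Ioi 1) := by
      apply (integrableOn_Ioi_rpow_of_lt (a := (-2:ℝ)) (by norm_num) one_pos).congr_fun
        (fun x hx => ?_) measurableSet_Ioi
      have hxpos : (0:ℝ) < x := lt_trans one_pos hx
      rw [show ((-2 : ℝ)) = -((2:ℕ):ℝ) by norm_num, Real.rpow_neg hxpos.le,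
        Real.rpow_natCast]
    have hi : IntegrableOn (fun t : ℝ => 2 * (t ^ 2)⁻¹) (Ioi 1) := hi0.const_mul 2
    rw [← ofReal_integral_eq_lintegral_ofReal hi ?_]
    · exact ENNReal.ofReal_ne_top
    · filter_upwards [ae_restrict_mem measurableSet_Ioi] with t ht
      have : (0:ℝ) < t := lt_trans one_pos ht
      positivity
  exact ENNReal.add_ne_top.2 ⟨(h1.trans_lt ENNReal.one_lt_top).ne, (h2.trans_lt h2'.lt_top).ne⟩




lemma cube_abs_le {c : ℝ} (hc : 0 < c) (a : ℝ) :
    |a| ^ 3 ≤ (1 + 2 * (8 / c) ^ 2) * Real.exp (c / 8 * a ^ 2) := by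
  have h1 : |a| ^ 3 ≤ 1 + a ^ 4 := by
    rcases le_or_gt (|a|) 1 with h | h
    · have : |a| ^ 3 ≤ 1 := pow_le_one₀ (abs_nonneg a) h
      nlinarith [pow_nonneg (abs_nonneg a) 4, sq_nonneg (a^2)]
    · have h3 : |a| ^ 3 ≤ |a| ^ 4 := pow_le_pow_right₀ h.le (by norm_num)
      have h4 : |a| ^ 4 = a ^ 4 := by rw [← abs_pow, abs_of_nonneg (by positivity)]
      nlinarith
  have h2 : a ^ 4 ≤ 2 * (8 / c) ^ 2 * Real.exp (c / 8 * a ^ 2) := by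
    have hb := sq_le_exp (w := c / 8 * a ^ 2) (by positivity)
    have hc' : (c / 8 * a ^ 2) ^ 2 = (c/8)^2 * a ^ 4 := by ring
    rw [hc'] at hb
    have key : (8/c)^2 * ((c/8)^2 * a^4) ≤ (8/c)^2 * (2 * Real.exp (c / 8 * a ^ 2)) :=
      mul_le_mul_of_nonneg_left hb (by positivity)
    have hinv : (8/c)^2 * (c/8)^2 = 1 := by field_simp
    rw [← mul_assoc, hinv, one_mul] at key
    linarith
  have h3 : (1:ℝ) ≤ Real.exp (c / 8 * a ^ 2) := Real.one_le_exp (by positivity)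
  nlinarith

variable (ν : Measure ℝ) [IsProbabilityMeasure ν] (c : ℝ) (hc : 0 < c)
  (h1 : Integrable (fun x : ℝ => x) ν) (h2 : ∫ x, x ∂ν = 0)
  (h3 : Integrable (fun x : ℝ => x ^ 2) ν) (h4 : ∫ x, x ^ 2 ∂ν = 1)
  (h5 : Integrable (fun x => Real.exp (c * x ^ 2)) ν)

include hc h1 h2 h3 h4 h5 in
lemma mgf_prod_bound :
    ∃ K : ℝ, 0 ≤ K ∧ ∀ l : ℝ, |l| ≤ c / 2 →
      Integrable (fun z : ℝ × ℝ => Real.exp (l * (z.1 * z.2))) (ν.prod ν) ∧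
      ∫ z : ℝ × ℝ, Real.exp (l * (z.1 * z.2)) ∂(ν.prod ν)
        ≤ Real.exp (l ^ 2 / 2 * (1 + |l| * K)) := by
  set K₁ : ℝ := 1 + 2 * (8 / c) ^ 2 with hK₁
  have hK₁pos : 0 < K₁ := by positivity
  set ρ := ν.prod ν with hρ
  -- the dominating integrable weight
  have hW : Integrable
      (fun z : ℝ × ℝ => (K₁ * Real.exp (c * z.1 ^ 2)) * (K₁ * Real.exp (c * z.2 ^ 2))) ρ :=
    (h5.const_mul K₁).mul_prod (h5.const_mul K₁)
  have hptW : ∀ z : ℝ × ℝ, |z.1 * z.2| ^ 3 * Real.exp (c / 2 * |z.1 * z.2|)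
      ≤ (K₁ * Real.exp (c * z.1 ^ 2)) * (K₁ * Real.exp (c * z.2 ^ 2)) := by
    rintro ⟨a, b⟩
    have hab : |a * b| = |a| * |b| := abs_mul a b
    have he1 : Real.exp (c / 2 * |a * b|) ≤ Real.exp (c / 4 * a ^ 2 + c / 4 * b ^ 2) := by
      apply Real.exp_le_exp.2
      rw [hab]
      nlinarith [sq_nonneg (|a| - |b|), sq_abs a, sq_abs b, abs_nonneg a, abs_nonneg b, hc]
    calc |a * b| ^ 3 * Real.exp (c / 2 * |a * b|)
        = (|a| ^ 3 * |b| ^ 3) * Real.exp (c / 2 * |a * b|) := by rw [hab, mul_pow]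
      _ ≤ ((K₁ * Real.exp (c / 8 * a ^ 2)) * (K₁ * Real.exp (c / 8 * b ^ 2)))
            * Real.exp (c / 4 * a ^ 2 + c / 4 * b ^ 2) := by
          apply mul_le_mul _ he1 (Real.exp_pos _).le (by positivity)
          exact mul_le_mul (cube_abs_le hc a) (cube_abs_le hc b)
            (by positivity) (by positivity)
      _ = (K₁ * Real.exp (c / 8 * a ^ 2 + c / 4 * a ^ 2))
            * (K₁ * Real.exp (c / 8 * b ^ 2 + c / 4 * b ^ 2)) := by
          simp only [Real.exp_add]; ring
      _ ≤ (K₁ * Real.exp (c * a ^ 2)) * (K₁ * Real.exp (c * b ^ 2)) := by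
          apply mul_le_mul _ _ (by positivity) (by positivity)
          · exact mul_le_mul_of_nonneg_left (Real.exp_le_exp.2 (by nlinarith [sq_nonneg a])) hK₁pos.le
          · exact mul_le_mul_of_nonneg_left (Real.exp_le_exp.2 (by nlinarith [sq_nonneg b])) hK₁pos.le
  have hmeas3 : Continuous fun z : ℝ × ℝ => |z.1 * z.2| ^ 3 * Real.exp (c / 2 * |z.1 * z.2|) := by
    fun_prop
  have hI3 : Integrable (fun z : ℝ × ℝ => |z.1 * z.2| ^ 3 * Real.exp (c / 2 * |z.1 * z.2|)) ρ := by
    apply hW.mono' hmeas3.aestronglyMeasurable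
    filter_upwards with z
    rw [Real.norm_eq_abs, abs_of_nonneg (by positivity)]
    exact hptW z
  set K : ℝ := ∫ z : ℝ × ℝ, |z.1 * z.2| ^ 3 * Real.exp (c / 2 * |z.1 * z.2|) ∂ρ with hK
  have hK0 : 0 ≤ K := integral_nonneg fun z => by positivity
  refine ⟨K, hK0, fun l hl => ?_⟩
  have hZ : Integrable (fun z : ℝ × ℝ => z.1 * z.2) ρ := h1.mul_prod h1
  have hEZ : ∫ z : ℝ × ℝ, z.1 * z.2 ∂ρ = 0 := by
    rw [hρ, integral_prod_mul (f := fun x : ℝ => x) (g := fun x : ℝ => x), h2, zero_mul]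
  have hZ2 : Integrable (fun z : ℝ × ℝ => (z.1 * z.2) ^ 2) ρ := by
    simpa [mul_pow] using h3.mul_prod h3
  have hEZ2 : ∫ z : ℝ × ℝ, (z.1 * z.2) ^ 2 ∂ρ = 1 := by
    simp_rw [mul_pow]
    rw [hρ, integral_prod_mul (f := fun x : ℝ => x ^ 2) (g := fun x : ℝ => x ^ 2), h4, one_mul]
  -- dominating function
  set g : ℝ × ℝ → ℝ := fun z => 1 + l * (z.1 * z.2)
      + (l ^ 2 * (z.1 * z.2) ^ 2
        + l ^ 2 * |l| * (|z.1 * z.2| ^ 3 * Real.exp (c / 2 * |z.1 * z.2|))) / 2 with hg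
  have hpt : ∀ z : ℝ × ℝ, Real.exp (l * (z.1 * z.2)) ≤ g z := by
    intro z
    set Z := z.1 * z.2 with hZdef
    have t1 : Real.exp (l * Z) ≤ 1 + l * Z + (l * Z) ^ 2 / 2 * Real.exp |l * Z| :=
      exp_taylor (l * Z)
    have habs : |l * Z| = |l| * |Z| := abs_mul l Z
    have t2 : Real.exp (|l| * |Z|) ≤ 1 + (|l| * |Z|) * Real.exp (|l| * |Z|) := by
      have := exp_sub_one_le_mul (|l| * |Z|) (by positivity)
      linarith
    have t3 : Real.exp (|l| * |Z|) ≤ Real.exp (c / 2 * |Z|) :=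
      Real.exp_le_exp.2 (mul_le_mul_of_nonneg_right hl (abs_nonneg _))
    have t4 : (l * Z) ^ 2 * Real.exp |l * Z|
        ≤ l ^ 2 * Z ^ 2 + l ^ 2 * |l| * (|Z| ^ 3 * Real.exp (c / 2 * |Z|)) := by
      rw [habs, mul_pow]
      have hZ2nn : 0 ≤ l ^ 2 * Z ^ 2 := by positivity
      have step : Real.exp (|l| * |Z|) ≤ 1 + (|l| * |Z|) * Real.exp (c / 2 * |Z|) := by
        have : (|l| * |Z|) * Real.exp (|l| * |Z|) ≤ (|l| * |Z|) * Real.exp (c / 2 * |Z|) :=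
          mul_le_mul_of_nonneg_left t3 (by positivity)
        linarith
      have := mul_le_mul_of_nonneg_left step hZ2nn
      have hsq : Z ^ 2 = |Z| ^ 2 := (sq_abs Z).symm
      calc l ^ 2 * Z ^ 2 * Real.exp (|l| * |Z|)
          ≤ l ^ 2 * Z ^ 2 * (1 + (|l| * |Z|) * Real.exp (c / 2 * |Z|)) := this
        _ = l ^ 2 * Z ^ 2 + l ^ 2 * |l| * (|Z| ^ 2 * |Z| * Real.exp (c / 2 * |Z|)) := by
            rw [hsq]; ring
        _ = l ^ 2 * Z ^ 2 + l ^ 2 * |l| * (|Z| ^ 3 * Real.exp (c / 2 * |Z|)) := by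
            norm_num [pow_succ]
    simp only [hg]
    rw [← hZdef]
    nlinarith [t1, t4]
  have hA : Integrable (fun z : ℝ × ℝ => 1 + l * (z.1 * z.2)) ρ :=
    (integrable_const 1).add (hZ.const_mul l)
  have hB1 : Integrable (fun z : ℝ × ℝ => l ^ 2 * (z.1 * z.2) ^ 2) ρ := hZ2.const_mul (l ^ 2)
  have hB2 : Integrable
      (fun z : ℝ × ℝ => l ^ 2 * |l| * (|z.1 * z.2| ^ 3 * Real.exp (c / 2 * |z.1 * z.2|))) ρ :=
    hI3.const_mul (l ^ 2 * |l|)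
  have hB : Integrable (fun z : ℝ × ℝ => (l ^ 2 * (z.1 * z.2) ^ 2
      + l ^ 2 * |l| * (|z.1 * z.2| ^ 3 * Real.exp (c / 2 * |z.1 * z.2|))) / 2) ρ :=
    (hB1.add hB2).div_const 2
  have hgint : Integrable g ρ := hA.add hB
  have hexpmeas : Continuous fun z : ℝ × ℝ => Real.exp (l * (z.1 * z.2)) := by fun_prop
  have hint_exp : Integrable (fun z : ℝ × ℝ => Real.exp (l * (z.1 * z.2))) ρ := by
    apply hgint.mono' hexpmeas.aestronglyMeasurable
    filter_upwards with z
    rw [Real.norm_eq_abs, abs_of_nonneg (Real.exp_pos _).le]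
    exact hpt z
  refine ⟨hint_exp, ?_⟩
  have hle : ∫ z : ℝ × ℝ, Real.exp (l * (z.1 * z.2)) ∂ρ ≤ ∫ z, g z ∂ρ :=
    integral_mono hint_exp hgint hpt
  have hgval : ∫ z, g z ∂ρ = 1 + l ^ 2 / 2 * (1 + |l| * K) := by
    simp only [hg]
    rw [integral_add hA hB,
      integral_add (integrable_const 1) (hZ.const_mul l),
      integral_div,
      integral_add hB1 hB2,
      integral_const_mul, integral_const_mul, integral_const, hEZ, hEZ2,
      integral_const_mul, ← hK]
    simp [measure_univ]
    ring
  rw [hgval] at hle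
  calc ∫ z : ℝ × ℝ, Real.exp (l * (z.1 * z.2)) ∂ρ
      ≤ 1 + l ^ 2 / 2 * (1 + |l| * K) := hle
    _ ≤ Real.exp (l ^ 2 / 2 * (1 + |l| * K)) := by
        have := Real.add_one_le_exp (l ^ 2 / 2 * (1 + |l| * K))
        linarith




lemma markov_exp {Ω' : Type*} [MeasurableSpace Ω'] (μ : Measure Ω')
    {g : Ω' → ℝ} (hg : Measurable g) (θ t : ℝ) (hθ : 0 ≤ θ) :
    μ {q | t ≤ g q} ≤ ENNReal.ofReal (Real.exp (-θ * t))
      * ∫⁻ q, ENNReal.ofReal (Real.exp (θ * g q)) ∂μ := by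
  have h0 : μ {q | t ≤ g q}
      ≤ μ {q | ENNReal.ofReal (Real.exp (θ * t)) ≤ ENNReal.ofReal (Real.exp (θ * g q))} := by
    apply measure_mono
    intro q hq
    simp only [Set.mem_setOf_eq] at hq ⊢
    exact ENNReal.ofReal_le_ofReal
      (Real.exp_le_exp.2 (mul_le_mul_of_nonneg_left hq hθ))
  have h1 := mul_meas_ge_le_lintegral₀
    (((hg.const_mul θ).exp.ennreal_ofReal).aemeasurable)
    (ENNReal.ofReal (Real.exp (θ * t))) (μ := μ)
  calc μ {q | t ≤ g q}
      ≤ μ {q | ENNReal.ofReal (Real.exp (θ * t)) ≤ ENNReal.ofReal (Real.exp (θ * g q))} := h0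
    _ = ENNReal.ofReal (Real.exp (-θ * t)) * (ENNReal.ofReal (Real.exp (θ * t))
        * μ {q | ENNReal.ofReal (Real.exp (θ * t)) ≤ ENNReal.ofReal (Real.exp (θ * g q))}) := by
        rw [← mul_assoc, ← ENNReal.ofReal_mul (Real.exp_pos _).le, ← Real.exp_add]
        norm_num
    _ ≤ ENNReal.ofReal (Real.exp (-θ * t))
        * ∫⁻ q, ENNReal.ofReal (Real.exp (θ * g q)) ∂μ := mul_le_mul_right h1 _

lemma tonelli_pow (ν : Measure ℝ) [IsProbabilityMeasure ν] (l : ℝ) (n : ℕ) :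
    ∫⁻ q : (Fin n → ℝ) × (Fin n → ℝ),
        ENNReal.ofReal (Real.exp (l * ∑ i, q.1 i * q.2 i))
        ∂((Measure.pi fun _ : Fin n => ν).prod (Measure.pi fun _ : Fin n => ν))
      = (∫⁻ z : ℝ × ℝ, ENNReal.ofReal (Real.exp (l * (z.1 * z.2))) ∂(ν.prod ν)) ^ n := by
  have hmeas2 : Measurable fun z : ℝ × ℝ => ENNReal.ofReal (Real.exp (l * (z.1 * z.2))) :=
    ((((measurable_fst.mul measurable_snd).const_mul l).exp)).ennreal_ofReal
  have hrw : ∀ q : (Fin n → ℝ) × (Fin n → ℝ),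
      ENNReal.ofReal (Real.exp (l * ∑ i, q.1 i * q.2 i))
        = ∏ i, ENNReal.ofReal (Real.exp (l * (q.1 i * q.2 i))) := by
    intro q
    rw [Finset.mul_sum, Real.exp_sum, ENNReal.ofReal_prod_of_nonneg
      (fun i _ => (Real.exp_pos _).le)]
  simp_rw [hrw]
  have hmeasq : Measurable fun q : (Fin n → ℝ) × (Fin n → ℝ) =>
      ∏ i, ENNReal.ofReal (Real.exp (l * (q.1 i * q.2 i))) := by
    apply Finset.measurable_prod
    intro i _
    exact ((Measurable.const_mul (f := fun q : (Fin n → ℝ) × (Fin n → ℝ) => q.1 i * q.2 i) (((measurable_pi_apply i).comp measurable_fst).mul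
      ((measurable_pi_apply i).comp measurable_snd)) l)).exp.ennreal_ofReal
  rw [lintegral_prod _ hmeasq.aemeasurable]
  have inner : ∀ a : Fin n → ℝ,
      (∫⁻ b : Fin n → ℝ, ∏ i, ENNReal.ofReal (Real.exp (l * (a i * b i)))
        ∂Measure.pi fun _ : Fin n => ν)
      = ∏ i : Fin n, ∫⁻ y : ℝ, ENNReal.ofReal (Real.exp (l * (a i * y))) ∂ν := by
    intro a
    exact lintegral_pi_prod (fun _ => ν)
      (fun i => fun y => ENNReal.ofReal (Real.exp (l * (a i * y))))
      (fun i => ((measurable_id.const_mul (a i)).const_mul l).exp.ennreal_ofReal)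
  simp_rw [inner]
  have houter : (∫⁻ a : Fin n → ℝ,
      ∏ i : Fin n, (fun x : ℝ => ∫⁻ y : ℝ, ENNReal.ofReal (Real.exp (l * (x * y))) ∂ν) (a i)
        ∂Measure.pi fun _ : Fin n => ν)
      = ∏ _i : Fin n, ∫⁻ x : ℝ, ∫⁻ y : ℝ, ENNReal.ofReal (Real.exp (l * (x * y))) ∂ν ∂ν :=
    lintegral_pi_prod (fun _ => ν) _
      (fun i => Measurable.lintegral_prod_right
        (f := fun x y => ENNReal.ofReal (Real.exp (l * (x * y)))) hmeas2)
  simp only [] at houter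
  rw [houter, Finset.prod_const, Finset.card_univ, Fintype.card_fin,
    ← lintegral_prod _ hmeas2.aemeasurable]


end Stmt18Aux

open MeasureTheory Stmt18Aux

set_option maxHeartbeats 1000000 in
/-- Local Chernoff bound for i.i.d. subgaussian spike priors: if `π` is
`σ²`-subgaussian with mean 0 and variance 1, and `x¹, x²` are independent vectors
with i.i.d. entries distributed as `π`, then for any `η > 0` there are `δ, C > 0`
such that for all `n` and `t ∈ [0, δn]`,
`Pr{|⟨x¹,x²⟩| ≥ t} ≤ C exp(−(1−η)t²/(2n))`. -/
theorem stmt18 {Ω : Type*} [MeasurableSpace Ω]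
    (P : Measure Ω) [IsProbabilityMeasure P]
    (π : Ω → ℝ) (hmeas : Measurable π) (σ2 : ℝ) (hσ : 0 < σ2)
    (hmgfInt : ∀ t : ℝ, Integrable (fun x => Real.exp (t * π x)) P)
    (hmgf : ∀ t : ℝ, ∫ x, Real.exp (t * π x) ∂P ≤ Real.exp (σ2 * t ^ 2 / 2))
    (hmean : ∫ x, π x ∂P = 0) (hvar : ∫ x, (π x) ^ 2 ∂P = 1) :
    ∀ η : ℝ, 0 < η → ∃ δ > (0 : ℝ), ∃ C > (0 : ℝ), ∀ n : ℕ, ∀ t : ℝ,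
      0 ≤ t → t ≤ δ * n →
      (((Measure.pi fun _ : Fin n => P.map π).prod
          (Measure.pi fun _ : Fin n => P.map π))
        {q | t ≤ |∑ i, q.1 i * q.2 i|}).toReal
        ≤ C * Real.exp (-(1 - η) * t ^ 2 / (2 * n)) := by
  intro η hη
  set ν : Measure ℝ := P.map π with hν
  haveI : IsProbabilityMeasure ν := Measure.isProbabilityMeasure_map hmeas.aemeasurable
  set c : ℝ := (4 * σ2)⁻¹ with hc
  have hcpos : 0 < c := by positivity
  -- integrability of |x| type dominators
  have hdom : Integrable (fun x => Real.exp (π x) + Real.exp (-π x)) P := by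
    have ha : Integrable (fun x => Real.exp (π x)) P := by simpa using hmgfInt 1
    have hb : Integrable (fun x => Real.exp (-π x)) P := by
      have := hmgfInt (-1); simpa [neg_mul] using this
    exact ha.add hb
  have h1P : Integrable π P := by
    apply hdom.mono' hmeas.aestronglyMeasurable
    filter_upwards with x
    rw [Real.norm_eq_abs, abs_le]
    constructor
    · nlinarith [Real.add_one_le_exp (-π x), Real.exp_pos (π x)]
    · nlinarith [Real.add_one_le_exp (π x), Real.exp_pos (-π x)]
  have h1 : Integrable (fun x : ℝ => x) ν := by
    rw [hν]
    exact (integrable_map_measure (by exact aestronglyMeasurable_id)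
      hmeas.aemeasurable).2 h1P
  have h2 : ∫ x, x ∂ν = 0 := by
    rw [hν]
    rw [show ∫ x : ℝ, x ∂(P.map π) = ∫ x, π x ∂P from
      integral_map hmeas.aemeasurable (by exact aestronglyMeasurable_id)]
    exact hmean
  have h3 : Integrable (fun x : ℝ => x ^ 2) ν := by
    rw [hν]
    refine (integrable_map_measure (by exact (measurable_id.pow_const 2).aestronglyMeasurable)
      hmeas.aemeasurable).2 ?_
    apply (hdom.const_mul 2).mono' (by exact (hmeas.pow_const 2).aestronglyMeasurable)
    filter_upwards with x
    have hx : |π x| ^ 2 ≤ 2 * Real.exp |π x| := Stmt18Aux.sq_le_exp (abs_nonneg _)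
    have : Real.exp |π x| ≤ Real.exp (π x) + Real.exp (-π x) := by
      rcases abs_cases (π x) with ⟨h, _⟩ | ⟨h, _⟩ <;> rw [h]
      · nlinarith [Real.exp_pos (-π x)]
      · nlinarith [Real.exp_pos (π x)]
    rw [Real.norm_eq_abs, Function.comp]
    rw [abs_of_nonneg (by positivity)]
    nlinarith [sq_abs (π x)]
  have h4 : ∫ x, x ^ 2 ∂ν = 1 := by
    rw [hν]
    rw [show ∫ x : ℝ, x ^ 2 ∂(P.map π) = ∫ x, (π x) ^ 2 ∂P from
      integral_map hmeas.aemeasurable (measurable_id.pow_const 2).aestronglyMeasurable]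
    exact hvar
  have h5 : Integrable (fun x => Real.exp (c * x ^ 2)) ν := by
    have hne := expsq_lintegral_ne_top P π hmeas σ2 hσ hmgfInt hmgf
    have hmble : Measurable fun x : ℝ => Real.exp (c * x ^ 2) :=
      ((measurable_id.pow_const 2).const_mul c).exp
    have htrans : ∫⁻ y, ENNReal.ofReal (Real.exp (c * y ^ 2)) ∂ν
        = ∫⁻ x, ENNReal.ofReal (Real.exp (c * π x ^ 2)) ∂P := by
      rw [hν, lintegral_map hmble.ennreal_ofReal hmeas]
    refine ⟨hmble.aestronglyMeasurable, ?_⟩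
    rw [hasFiniteIntegral_iff_ofReal (Filter.Eventually.of_forall fun x => (Real.exp_pos _).le)]
    rw [htrans, hc]
    exact hne.lt_top
  obtain ⟨K, hK0, hGbound⟩ := mgf_prod_bound ν c hcpos h1 h2 h3 h4 h5
  have hK1pos : 0 < K + 1 := by linarith
  set δ : ℝ := min (c / 2) (η / (K + 1)) with hδ
  have hδpos : 0 < δ := lt_min (by positivity) (by positivity)
  refine ⟨δ, hδpos, 2, two_pos, ?_⟩
  intro n t ht htn
  rcases Nat.eq_zero_or_pos n with hn0 | hn
  · subst hn0
    have ht0 : t = 0 := le_antisymm (by simpa using htn) ht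
    subst ht0
    have hb : (((Measure.pi fun _ : Fin 0 => ν).prod (Measure.pi fun _ : Fin 0 => ν))
        {q | (0:ℝ) ≤ |∑ i : Fin 0, q.1 i * q.2 i|}).toReal ≤ 1 := by
      apply ENNReal.toReal_le_of_le_ofReal zero_le_one
      rw [ENNReal.ofReal_one]
      exact prob_le_one
    have : Real.exp (-(1 - η) * (0:ℝ) ^ 2 / (2 * (0:ℕ))) = 1 := by norm_num
    rw [this]
    linarith
  -- main case n ≥ 1
  have hnpos : (0:ℝ) < n := by exact_mod_cast hn
  set l : ℝ := t / n with hldef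
  have hl0 : 0 ≤ l := div_nonneg ht hnpos.le
  have hlδ : l ≤ δ := by
    rw [hldef, div_le_iff₀ hnpos]
    calc t ≤ δ * n := htn
      _ = δ * n := rfl
  have hlc : |l| ≤ c / 2 := by
    rw [abs_of_nonneg hl0]
    exact hlδ.trans (min_le_left _ _)
  have hlη : l * (K + 1) ≤ η := by
    have : l ≤ η / (K + 1) := hlδ.trans (min_le_right _ _)
    calc l * (K + 1) ≤ (η / (K + 1)) * (K + 1) :=
          mul_le_mul_of_nonneg_right this hK1pos.le
      _ = η := div_mul_cancel₀ η hK1pos.ne'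
  have hlK : l * K ≤ η := by nlinarith
  obtain ⟨hint₁, hGle₁⟩ := hGbound l hlc
  obtain ⟨hint₂, hGle₂⟩ := hGbound (-l) (by rwa [abs_neg])
  rw [abs_neg, abs_of_nonneg hl0] at hGle₂
  rw [abs_of_nonneg hl0] at hGle₁
  set E : ℝ := Real.exp (l ^ 2 / 2 * (1 + l * K)) with hE
  have hEpos : 0 < E := Real.exp_pos _
  set μn := (Measure.pi fun _ : Fin n => ν).prod (Measure.pi fun _ : Fin n => ν) with hμn
  haveI : IsProbabilityMeasure μn := by rw [hμn]; infer_instance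
  set S : (Fin n → ℝ) × (Fin n → ℝ) → ℝ := fun q => ∑ i, q.1 i * q.2 i with hS
  have hSmeas : Measurable S := by
    apply Finset.measurable_sum
    intro i _
    exact ((measurable_pi_apply i).comp measurable_fst).mul
      ((measurable_pi_apply i).comp measurable_snd)
  -- Lint bounds
  have hLint₁ : ∫⁻ z : ℝ × ℝ, ENNReal.ofReal (Real.exp (l * (z.1 * z.2))) ∂(ν.prod ν)
      ≤ ENNReal.ofReal E := by
    rw [← ofReal_integral_eq_lintegral_ofReal hint₁
      (Filter.Eventually.of_forall fun z => (Real.exp_pos _).le)]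
    exact ENNReal.ofReal_le_ofReal (by { rw [hE]; exact hGle₁.trans (le_of_eq rfl) })
  have hLint₂ : ∫⁻ z : ℝ × ℝ, ENNReal.ofReal (Real.exp (-l * (z.1 * z.2))) ∂(ν.prod ν)
      ≤ ENNReal.ofReal E := by
    rw [← ofReal_integral_eq_lintegral_ofReal hint₂
      (Filter.Eventually.of_forall fun z => (Real.exp_pos _).le)]
    exact ENNReal.ofReal_le_ofReal (by { rw [hE]; exact hGle₂.trans (le_of_eq (by rw [show (-l) ^ 2 = l ^ 2 by ring])) })
  -- Markov + Tonelli for upper and lower tails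
  have bound1 : μn {q | t ≤ S q} ≤ ENNReal.ofReal (Real.exp (-l * t)) * ENNReal.ofReal E ^ n := by
    calc μn {q | t ≤ S q}
        ≤ ENNReal.ofReal (Real.exp (-l * t))
          * ∫⁻ q, ENNReal.ofReal (Real.exp (l * S q)) ∂μn := markov_exp μn hSmeas l t hl0
      _ = ENNReal.ofReal (Real.exp (-l * t))
          * (∫⁻ z : ℝ × ℝ, ENNReal.ofReal (Real.exp (l * (z.1 * z.2))) ∂(ν.prod ν)) ^ n := by
          rw [hμn, hS, tonelli_pow]
      _ ≤ _ := by exact mul_le_mul_right (pow_le_pow_left' hLint₁ n) _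
  have bound2 : μn {q | t ≤ -S q} ≤ ENNReal.ofReal (Real.exp (-l * t)) * ENNReal.ofReal E ^ n := by
    calc μn {q | t ≤ -S q}
        ≤ ENNReal.ofReal (Real.exp (-l * t))
          * ∫⁻ q, ENNReal.ofReal (Real.exp (l * -S q)) ∂μn := markov_exp μn hSmeas.neg l t hl0
      _ = ENNReal.ofReal (Real.exp (-l * t))
          * (∫⁻ z : ℝ × ℝ, ENNReal.ofReal (Real.exp (-l * (z.1 * z.2))) ∂(ν.prod ν)) ^ n := by
          simp_rw [mul_neg, ← neg_mul]
          rw [hμn, hS, tonelli_pow]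
      _ ≤ _ := by exact mul_le_mul_right (pow_le_pow_left' hLint₂ n) _
  have habs : {q : (Fin n → ℝ) × (Fin n → ℝ) | t ≤ |S q|}
      ⊆ {q | t ≤ S q} ∪ {q | t ≤ -S q} := by
    intro q hq
    simp only [Set.mem_setOf_eq] at hq ⊢
    rcases le_abs.1 hq with h | h
    · exact Or.inl h
    · exact Or.inr h
  have hmain : μn {q | t ≤ |S q|} ≤ ENNReal.ofReal (2 * Real.exp (-l * t) * E ^ n) := by
    calc μn {q | t ≤ |S q|}
        ≤ μn ({q | t ≤ S q} ∪ {q | t ≤ -S q}) := measure_mono habs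
      _ ≤ μn {q | t ≤ S q} + μn {q | t ≤ -S q} := measure_union_le _ _
      _ ≤ ENNReal.ofReal (Real.exp (-l * t)) * ENNReal.ofReal E ^ n
          + ENNReal.ofReal (Real.exp (-l * t)) * ENNReal.ofReal E ^ n := add_le_add bound1 bound2
      _ = ENNReal.ofReal (2 * Real.exp (-l * t) * E ^ n) := by
          rw [← two_mul, ← ENNReal.ofReal_pow hEpos.le,
            ← ENNReal.ofReal_mul (Real.exp_pos _).le, ← ENNReal.ofReal_ofNat,
            ← ENNReal.ofReal_mul (by norm_num), mul_assoc]
  have hreal : 2 * Real.exp (-l * t) * E ^ n ≤ 2 * Real.exp (-(1 - η) * t ^ 2 / (2 * n)) := by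
    have hteq : t = l * n := by
      rw [hldef]; field_simp
    have hexp : Real.exp (-l * t) * E ^ n
        = Real.exp (-l * t + n * (l ^ 2 / 2 * (1 + l * K))) := by
      rw [hE, ← Real.exp_nat_mul, ← Real.exp_add]
    rw [mul_assoc, hexp]
    have harg : -l * t + n * (l ^ 2 / 2 * (1 + l * K)) ≤ -(1 - η) * t ^ 2 / (2 * n) := by
      have e1 : -l * t + n * (l ^ 2 / 2 * (1 + l * K)) = (l * K - 1) * (l ^ 2 * n / 2) := by
        rw [hteq]; ring
      have e2 : -(1 - η) * t ^ 2 / (2 * n) = (η - 1) * (l ^ 2 * n / 2) := by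
        rw [hteq]; field_simp; ring
      rw [e1, e2]
      exact mul_le_mul_of_nonneg_right (by linarith) (by positivity)
    have h := Real.exp_le_exp.2 harg
    linarith
  have hfinal : (μn {q | t ≤ |S q|}).toReal ≤ 2 * Real.exp (-(1 - η) * t ^ 2 / (2 * n)) :=
    le_trans (ENNReal.toReal_le_of_le_ofReal (by positivity) hmain) hreal
  exact hfinal
end
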